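/- arXiv:0904.4202 — 3 statements merged into one kernel-verified Lean document; each statement's English description precedes it below -/
import Mathlib

section
/- (Proposition: distribution of the decoding delay.) Let k ≥ 1 be an integer and p ∈ (0,1). Let (B_{i,j})_{i≥1, 0≤j≤k} be an i.i.d. array of Bernoulli(p) random variables, X_i = (∑_{j=0}^{k} B_{i,j}) − 1, and Y_0 = 0, Y_n = max(Y_{n−1} + X_n, 0). For y ≥ 0 let H_y = inf{ h ≥ 0 : Y^{(y)}_h = 0 } be the hitting time of 0 of an independent copy of the reflected walk started at y. Fix i ≥ 1 and j ∈ {0, …, k−1}, and define the decoding delay D_j = (k − j) + (k+1) · inf{ m ≥ 0 : Y_{i+m} = 0 }. Then for every h ≥ 0: P(D_j = (k−j) + h(k+1) | B_{i,j} = 1) = ∑_{y≥0} ∑_{u=0}^{k} C(k, u) p^u (1−p)^{k−u} · P(H_{y+u} = h) · P(Y_{i−1} = y). -/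
open MeasureTheory ProbabilityTheory Function
open scoped ENNReal

/-!
On the event that packet `j` of block `i` is lost, that loss and the repair packet of block `i`
cancel, so the walk at the end of block `i` is `Y_{i-1} + U`, where `U` counts the losses among
the other `k` packets of the block. The variables `Y_{i-1}`, `U` and the increments of the later
blocks are functions of disjoint parts of the i.i.d. loss array, hence independent. `U` is
binomial `(k, p)`, and the later increments are i.i.d. with the law of `X₂`, so from block `i` on
the walk is a copy of `Y^{(Y_{i-1} + U)}`. Summing over the values of `(Y_{i-1}, U)` gives the
formula.
-/

namespace ENat

lemma natCast_add_mul_eq_natCast_iff {a b h : ℕ} (hb : b ≠ 0) {s : ℕ∞} :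
    (a : ℕ∞) + b * s = ((a + h * b : ℕ) : ℕ∞) ↔ s = h := by
  induction s using ENat.recTopCoe with
  | top =>
    rw [ENat.mul_top (Nat.cast_ne_zero.2 hb), add_top]
    exact iff_of_false (ENat.top_ne_natCast _) (ENat.top_ne_natCast _)
  | coe m => norm_cast; simp [mul_comm, hb]

end ENat

namespace MeasureTheory

theorem measure_eq_tsum_measure_inter {Ω β : Type*} [MeasurableSpace Ω]
    {μ : Measure Ω} [Countable β] {F : β → Set Ω} (hF : ∀ b, MeasurableSet (F b))
    (hdisj : Pairwise (Disjoint on F)) {E : Set Ω} (hE : MeasurableSet E)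
    (hcover : E ⊆ ⋃ b, F b) : μ E = ∑' b, μ (E ∩ F b) := by
  rw [← measure_iUnion (fun a b hab => (hdisj hab).mono Set.inter_subset_right
    Set.inter_subset_right) fun b => hE.inter (hF b), ← Set.inter_iUnion,
    Set.inter_eq_left.2 hcover]

namespace Measure

theorem ext_of_singleton_of_ae_mem {α : Type*} [MeasurableSpace α] [Countable α]
    [MeasurableSingletonClass α] {ν₁ ν₂ : Measure α} [IsProbabilityMeasure ν₁]
    [IsProbabilityMeasure ν₂] {F : Set α} (hF : ∀ᵐ a ∂ν₁, a ∈ F)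
    (h : ∀ a ∈ F, ν₁ {a} = ν₂ {a}) : ν₁ = ν₂ := by
  have hFm : MeasurableSet F := F.to_countable.measurableSet
  have hres : ν₁.restrict F = ν₂.restrict F := by
    refine ext_iff_singleton.2 fun a => ?_
    by_cases ha : a ∈ F
    · simp [restrict_apply (measurableSet_singleton a), Set.singleton_inter_of_mem ha, h a ha]
    · simp [restrict_apply (measurableSet_singleton a), Set.singleton_inter_eq_empty.2 ha]
  have hF₁ : ν₁ F = 1 := by
    rwa [ae_mem_iff_measure_eq hFm.nullMeasurableSet, measure_univ] at hF
  have hF₂ : ∀ᵐ a ∂ν₂, a ∈ F := by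
    rw [ae_mem_iff_measure_eq hFm.nullMeasurableSet, measure_univ, ← restrict_apply_univ, ← hres,
      restrict_apply_univ, hF₁]
  rw [← restrict_eq_self_of_ae_mem hF, ← restrict_eq_self_of_ae_mem hF₂, hres]

end Measure

end MeasureTheory

namespace ProbabilityTheory

variable {Ω ι κ : Type*} {mΩ : MeasurableSpace Ω} {μ : Measure Ω}

theorem iIndep.of_le_biSup {m : ι → MeasurableSpace Ω} (h_le : ∀ i, m i ≤ mΩ)
    (h : iIndep m μ) {S : κ → Set ι} (hS : Pairwise (Disjoint on S))
    {M : κ → MeasurableSpace Ω} (hM : ∀ a, M a ≤ ⨆ i ∈ S a, m i) : iIndep M μ := by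
  classical
  have := h.isProbabilityMeasure
  rw [iIndep_iff]
  intro s
  induction s using Finset.induction_on with
  | empty => simp
  | insert a s ha ih =>
    intro f hf
    rw [Finset.set_biInter_insert, Finset.prod_insert ha,
      ← ih fun b hb => hf b (Finset.mem_insert_of_mem hb)]
    have hdisj : Disjoint (S a) (⋃ b ∈ s, S b) :=
      Set.disjoint_iUnion₂_right.2 fun b hb => hS fun hab => ha (hab ▸ hb)
    refine (Indep_iff _ _ _).1 (indep_iSup_of_disjoint h_le h hdisj) _ _
      (hM a _ (hf a (Finset.mem_insert_self a s))) ?_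
    refine Finset.measurableSet_biInter s fun b hb => ?_
    exact ((hM b).trans (biSup_mono fun i hi => Set.mem_biUnion hb hi)) _
      (hf b (Finset.mem_insert_of_mem hb))

section SigmaOn

variable {β : Type*} [MeasurableSpace β] {B : ι → Ω → β}

abbrev sigmaOn (B : ι → Ω → β) (S : Set ι) : MeasurableSpace Ω :=
  ⨆ c ∈ S, MeasurableSpace.comap (B c) ‹_›

lemma measurable_sigmaOn {S : Set ι} {c : ι} (hc : c ∈ S) : Measurable[sigmaOn B S] (B c) :=
  Measurable.of_comap_le (le_iSup₂ (f := fun c (_ : c ∈ S) => MeasurableSpace.comap (B c) ‹_›) c hc)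

lemma sigmaOn_mono {S T : Set ι} (hST : S ⊆ T) : sigmaOn B S ≤ sigmaOn B T :=
  biSup_mono fun _ hc => hST hc

lemma sigmaOn_le (hmB : ∀ c, Measurable (B c)) (S : Set ι) : sigmaOn B S ≤ mΩ :=
  iSup₂_le fun c _ => (hmB c).comap_le

lemma iIndepFun.measure_inter_eq_mul_of_disjoint (hB : iIndepFun B μ)
    (hmB : ∀ c, Measurable (B c)) {S T : Set ι} (hST : Disjoint S T) {E F : Set Ω}
    (hE : MeasurableSet[sigmaOn B S] E) (hF : MeasurableSet[sigmaOn B T] F) :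
    μ (E ∩ F) = μ E * μ F :=
  (Indep_iff _ _ _).1 (indep_iSup_of_disjoint (fun c => (hmB c).comap_le)
    ((iIndepFun_iff_iIndep _ _ _).1 hB) hST) E F hE hF

lemma iIndepFun.of_measurable_sigmaOn {γ : κ → Type*} [∀ a, MeasurableSpace (γ a)]
    {f : ∀ a, Ω → γ a} (hB : iIndepFun B μ) (hmB : ∀ c, Measurable (B c))
    {S : κ → Set ι} (hS : Pairwise (Disjoint on S)) (hf : ∀ a, Measurable[sigmaOn B (S a)] (f a)) :
    iIndepFun f μ :=
  (iIndepFun_iff_iIndep _ _ _).2 <| ((iIndepFun_iff_iIndep _ _ _).1 hB).of_le_biSup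
    (fun c => (hmB c).comap_le) hS fun a => (hf a).comap_le

end SigmaOn

section Bernoulli

structure IsBernoulliFamily (B : ι → Ω → ℕ) (μ : Measure Ω) (p : ℝ) : Prop where
  nonneg : 0 ≤ p
  le_one : p ≤ 1
  measurable : ∀ c, Measurable (B c)
  indep : iIndepFun B μ
  measure_eq_one : ∀ c, μ {ω | B c ω = 1} = ENNReal.ofReal p
  measure_eq_zero : ∀ c, μ {ω | B c ω = 0} = ENNReal.ofReal (1 - p)

lemma choose_mul_pow_mul_pow_succ_succ (p : ℝ) (n u : ℕ) :
    ((n + 1).choose (u + 1) : ℝ) * p ^ (u + 1) * (1 - p) ^ (n + 1 - (u + 1)) =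
      (n.choose (u + 1) : ℝ) * p ^ (u + 1) * (1 - p) ^ (n - (u + 1)) * (1 - p) +
        (n.choose u : ℝ) * p ^ u * (1 - p) ^ (n - u) * p := by
  rw [Nat.choose_succ_succ', Nat.cast_add, Nat.add_sub_add_right]
  rcases lt_or_ge u n with hu | hu
  · obtain ⟨e, rfl⟩ := Nat.exists_eq_add_of_lt hu
    rw [show u + e + 1 - u = e + 1 by omega, show u + e + 1 - (u + 1) = e by omega]
    ring
  · rw [Nat.choose_eq_zero_of_lt (by omega : n < u + 1), Nat.sub_eq_zero_of_le hu]
    ring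

namespace IsBernoulliFamily

variable {B : ι → Ω → ℕ} {p : ℝ}

lemma comp_injective (hB : IsBernoulliFamily B μ p) {g : κ → ι} (hg : Injective g) :
    IsBernoulliFamily (fun a => B (g a)) μ p :=
  ⟨hB.nonneg, hB.le_one, fun _ => hB.measurable _, hB.indep.precomp hg,
    fun _ => hB.measure_eq_one _, fun _ => hB.measure_eq_zero _⟩

lemma ae_eq_zero_or_eq_one (hB : IsBernoulliFamily B μ p) (c : ι) :
    ∀ᵐ ω ∂μ, B c ω = 0 ∨ B c ω = 1 := by
  have := hB.indep.isProbabilityMeasure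
  have hmeas : ∀ m, MeasurableSet {ω | B c ω = m} := fun m =>
    hB.measurable c (measurableSet_singleton m)
  have hdisj : Disjoint {ω | B c ω = 0} {ω | B c ω = 1} :=
    Set.disjoint_left.2 fun ω h0 h1 => by simp_all
  have hunion : {ω | B c ω = 0 ∨ B c ω = 1} = {ω | B c ω = 0} ∪ {ω | B c ω = 1} :=
    Set.ofPred_or
  rw [ae_iff_measure_eq (hunion ▸ ((hmeas 0).union (hmeas 1)).nullMeasurableSet), hunion,
    measure_union hdisj (hmeas 1), hB.measure_eq_zero, hB.measure_eq_one,
    ← ENNReal.ofReal_add (by linarith [hB.le_one]) hB.nonneg, sub_add_cancel, ENNReal.ofReal_one,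
    measure_univ]

theorem measure_sum_eq (hB : IsBernoulliFamily B μ p) (s : Finset ι) (u : ℕ) :
    μ {ω | ∑ c ∈ s, B c ω = u} =
      ENNReal.ofReal (s.card.choose u * p ^ u * (1 - p) ^ (s.card - u)) := by
  classical
  have := hB.indep.isProbabilityMeasure
  have hp : 0 ≤ 1 - p := sub_nonneg.2 hB.le_one
  have hp0 := hB.nonneg
  induction s using Finset.induction_on generalizing u with
  | empty => cases u <;> simp
  | insert a s ha ih =>
    have hprod : ∀ v m, μ ({ω | ∑ c ∈ s, B c ω = v} ∩ {ω | B a ω = m}) =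
        μ {ω | ∑ c ∈ s, B c ω = v} * μ {ω | B a ω = m} := fun v m => by
      have hind : IndepFun (fun ω => ∑ c ∈ s, B c ω) (B a) μ := by
        simpa only [Finset.sum_fn] using hB.indep.indepFun_finsetSum_of_notMem hB.measurable ha
      exact hind.measure_inter_preimage_eq_mul _ _ (measurableSet_singleton v)
        (measurableSet_singleton m)
    have hmT : ∀ v, MeasurableSet {ω | ∑ c ∈ s, B c ω = v} := fun v =>
      (Finset.measurable_sum s fun c _ => hB.measurable c) (measurableSet_singleton v)
    simp only [Finset.sum_insert ha, Finset.card_insert_of_notMem ha]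
    cases u with
    | zero =>
      have hsplit : {ω | B a ω + ∑ c ∈ s, B c ω = 0} =
          {ω | ∑ c ∈ s, B c ω = 0} ∩ {ω | B a ω = 0} := by
        ext ω; simp [and_comm]
      rw [hsplit, hprod, ih, hB.measure_eq_zero, ← ENNReal.ofReal_mul (by positivity)]
      congr 1
      simp [pow_succ]
    | succ u =>
      have hsplit : ({ω | B a ω + ∑ c ∈ s, B c ω = u + 1} : Set Ω) =ᵐ[μ]
          (({ω | ∑ c ∈ s, B c ω = u + 1} ∩ {ω | B a ω = 0}) ∪
            ({ω | ∑ c ∈ s, B c ω = u} ∩ {ω | B a ω = 1}) : Set Ω) := by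
        refine Filter.eventuallyEq_set.2 ?_
        filter_upwards [hB.ae_eq_zero_or_eq_one a] with ω hω
        rcases hω with hω | hω <;> simp [hω, add_comm 1]
      have hdisj : Disjoint ({ω | ∑ c ∈ s, B c ω = u + 1} ∩ {ω | B a ω = 0})
          ({ω | ∑ c ∈ s, B c ω = u} ∩ {ω | B a ω = 1}) :=
        Set.disjoint_left.2 fun ω h h' => by simp_all
      rw [measure_congr hsplit,
        measure_union hdisj ((hmT u).inter (hB.measurable a (measurableSet_singleton 1))),
        hprod, hprod, ih, ih, hB.measure_eq_zero, hB.measure_eq_one,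
        ← ENNReal.ofReal_mul (by positivity), ← ENNReal.ofReal_mul (by positivity),
        ← ENNReal.ofReal_add (by positivity) (by positivity), choose_mul_pow_mul_pow_succ_succ]

end IsBernoulliFamily

end Bernoulli

end ProbabilityTheory

namespace Tetrys

def reflectedWalk (y : ℤ) (v : ℕ → ℤ) : ℕ → ℤ
  | 0 => y
  | n + 1 => max (reflectedWalk y v n + v n) 0

lemma reflectedWalk_add (y : ℤ) (v : ℕ → ℤ) (n m : ℕ) :
    reflectedWalk y v (n + m) = reflectedWalk (reflectedWalk y v n) (fun t => v (n + t)) m := by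
  induction m with
  | zero => rfl
  | succ m ih => rw [← Nat.add_assoc, reflectedWalk, ih]; rfl

lemma eq_reflectedWalk {W : ℕ → ℤ} {y : ℤ} {v : ℕ → ℤ} (h0 : W 0 = y)
    (hs : ∀ n, W (n + 1) = max (W n + v n) 0) : W = reflectedWalk y v := by
  funext n
  induction n with
  | zero => exact h0
  | succ n ih => rw [hs, ih]; rfl

lemma reflectedWalk_nonneg {y : ℤ} (hy : 0 ≤ y) (v : ℕ → ℤ) : ∀ n, 0 ≤ reflectedWalk y v n
  | 0 => hy
  | _ + 1 => le_max_right _ _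

lemma measurable_reflectedWalk {Ω : Type*} {m : MeasurableSpace Ω} {w : Ω → ℕ → ℤ} (y : ℤ)
    {n : ℕ} (hw : ∀ t < n, Measurable fun ω => w ω t) :
    Measurable fun ω => reflectedWalk y (w ω) n := by
  induction n with
  | zero => exact measurable_const
  | succ n ih =>
    exact ((ih fun t ht => hw t (ht.trans n.lt_succ_self)).add (hw n n.lt_succ_self)).max
      measurable_const

noncomputable def firstZero (w : ℕ → ℤ) : ℕ∞ := sInf {n : ℕ∞ | ∃ m : ℕ, n = m ∧ w m = 0}

lemma firstZero_eq_natCast_iff {w : ℕ → ℤ} {h : ℕ} :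
    firstZero w = h ↔ w h = 0 ∧ ∀ m < h, w m ≠ 0 := by
  constructor
  · intro hh
    have hne : {n : ℕ∞ | ∃ m : ℕ, n = m ∧ w m = 0}.Nonempty := by
      by_contra hne
      simp [firstZero, Set.not_nonempty_iff_eq_empty.1 hne] at hh
    obtain ⟨m, hm, hwm⟩ := csInf_mem hne
    rw [← firstZero, hh, Nat.cast_inj] at hm
    refine ⟨hm ▸ hwm, fun m' hm' hwm' => ?_⟩
    have : firstZero w ≤ m' := csInf_le (OrderBot.bddBelow _) ⟨m', rfl, hwm'⟩
    exact absurd (Nat.cast_le.1 (hh ▸ this)) (not_le.2 hm')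
  · rintro ⟨h0, hmin⟩
    refine le_antisymm (sInf_le ⟨h, rfl, h0⟩) (le_sInf ?_)
    rintro _ ⟨m, rfl, hm⟩
    exact Nat.cast_le.2 (not_lt.1 fun hlt => hmin m hlt hm)

lemma measurableSet_firstZero_eq (h : ℕ) : MeasurableSet {w : ℕ → ℤ | firstZero w = h} := by
  simp only [firstZero_eq_natCast_iff, Set.ofPred_and, Set.ofPred_forall]
  exact (measurable_pi_apply h (measurableSet_singleton 0)).inter
    (.iInter fun m => .iInter fun _ => (measurable_pi_apply m (measurableSet_singleton 0)).compl)

lemma measurableSet_firstZero_reflectedWalk_eq (y : ℤ) (h : ℕ) :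
    MeasurableSet {v : ℕ → ℤ | firstZero (reflectedWalk y v) = h} :=
  measurable_pi_lambda _ (fun _ => measurable_reflectedWalk y fun t _ => measurable_pi_apply t)
    (measurableSet_firstZero_eq h)

variable {Ω : Type*} {k : ℕ} {B : ℕ × Fin (k + 1) → Ω → ℕ}

def blockIncrement (B : ℕ × Fin (k + 1) → Ω → ℕ) (n : ℕ) (ω : Ω) : ℤ :=
  (∑ j, (B (n, j) ω : ℤ)) - 1

def lossWalk (B : ℕ × Fin (k + 1) → Ω → ℕ) (n : ℕ) (ω : Ω) : ℤ :=
  reflectedWalk 0 (fun t => blockIncrement B (t + 1) ω) n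

lemma measurable_blockIncrement {S : Set (ℕ × Fin (k + 1))} {n : ℕ} (hS : ∀ j, (n, j) ∈ S) :
    Measurable[sigmaOn B S] (blockIncrement B n) :=
  (Finset.measurable_sum _ fun j _ =>
    (measurable_of_countable (Nat.cast : ℕ → ℤ)).comp (measurable_sigmaOn (hS j))).sub_const 1

lemma measurable_blockIncrement_seq {S : Set (ℕ × Fin (k + 1))} {e : ℕ → ℕ}
    (hS : ∀ t j, (e t, j) ∈ S) :
    Measurable[sigmaOn B S] fun ω t => blockIncrement B (e t) ω :=
  @measurable_pi_lambda _ _ _ (sigmaOn B S) _ _ fun t => measurable_blockIncrement (hS t)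

lemma measurable_lossWalk (n : ℕ) :
    Measurable[sigmaOn B {c | c.1 ≤ n}] (lossWalk B n) :=
  measurable_reflectedWalk 0 fun _ ht => measurable_blockIncrement fun _ => Nat.succ_le_of_lt ht

lemma lossWalk_nonneg (n : ℕ) (ω : Ω) : 0 ≤ lossWalk B n ω :=
  reflectedWalk_nonneg le_rfl _ n

lemma lossWalk_add (i m : ℕ) (ω : Ω) :
    lossWalk B (i + m) ω =
      reflectedWalk (lossWalk B i ω) (fun t => blockIncrement B (i + t + 1) ω) m :=
  reflectedWalk_add _ _ i m

lemma lossWalk_of_loss {i : ℕ} (hi : 1 ≤ i) {j₀ : Fin (k + 1)} {ω : Ω} (hloss : B (i, j₀) ω = 1) :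
    lossWalk B i ω = lossWalk B (i - 1) ω + ∑ j ∈ Finset.univ.erase j₀, B (i, j) ω := by
  obtain ⟨n, rfl⟩ := Nat.exists_eq_add_of_le' hi
  have hinc : blockIncrement B (n + 1) ω = ∑ j ∈ Finset.univ.erase j₀, B (n + 1, j) ω := by
    rw [blockIncrement, ← Finset.add_sum_erase _ _ (Finset.mem_univ j₀), hloss]
    push_cast
    ring
  change max (lossWalk B n ω + blockIncrement B (n + 1) ω) 0 = _
  rw [hinc, max_eq_left (add_nonneg (lossWalk_nonneg n ω) (Nat.cast_nonneg _))]
  rfl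

lemma lossWalk_add_eq_reflectedWalk_of_loss {i : ℕ} (hi : 1 ≤ i) {j₀ : Fin (k + 1)} {ω : Ω}
    {y u : ℕ} (hloss : B (i, j₀) ω = 1) (hy : lossWalk B (i - 1) ω = y)
    (hu : ∑ j ∈ Finset.univ.erase j₀, B (i, j) ω = u) :
    (fun m => lossWalk B (i + m) ω) =
      reflectedWalk ((y + u : ℕ) : ℤ) fun t => blockIncrement B (i + t + 1) ω := by
  funext m
  rw [lossWalk_add, lossWalk_of_loss hi hloss, hy, hu, Nat.cast_add]

section Probability

variable [MeasurableSpace Ω] {μ : Measure Ω} {p : ℝ}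

lemma measure_blockIncrement_eq (hB : IsBernoulliFamily B μ p) (n u : ℕ) :
    μ {ω | blockIncrement B n ω = u - 1} =
      ENNReal.ofReal ((k + 1).choose u * p ^ u * (1 - p) ^ (k + 1 - u)) := by
  have hset : {ω | blockIncrement B n ω = u - 1} = {ω | ∑ j, B (n, j) ω = u} := by
    ext ω
    simp only [blockIncrement, Set.mem_ofPred_eq, sub_left_inj]
    exact_mod_cast Iff.rfl
  rw [hset, (hB.comp_injective (Prod.mk_right_injective n)).measure_sum_eq, Finset.card_univ,
    Fintype.card_fin]

lemma ae_blockIncrement_mem_Icc (hB : IsBernoulliFamily B μ p) (n : ℕ) :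
    ∀ᵐ ω ∂μ, blockIncrement B n ω ∈ Set.Icc (-1 : ℤ) k := by
  have hle : ∀ᵐ ω ∂μ, ∀ j, B (n, j) ω ≤ 1 := ae_all_iff.2 fun j => by
    filter_upwards [hB.ae_eq_zero_or_eq_one (n, j)] with ω hω
    omega
  filter_upwards [hle] with ω hω
  have hnonneg : 0 ≤ ∑ j, (B (n, j) ω : ℤ) := by positivity
  have hsum : ∑ j, (B (n, j) ω : ℤ) ≤ k + 1 :=
    calc _ ≤ ∑ _j : Fin (k + 1), (1 : ℤ) := Finset.sum_le_sum fun j _ => by exact_mod_cast hω j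
      _ = k + 1 := by simp
  simp only [blockIncrement, Set.mem_Icc]
  constructor <;> linarith

variable {Ω₂ : Type*} [MeasurableSpace Ω₂] {μ₂ : Measure Ω₂} [IsProbabilityMeasure μ₂]

lemma identDistrib_blockIncrement (hB : IsBernoulliFamily B μ p) {Z : Ω₂ → ℤ} (hZ : Measurable Z)
    (hlawZ : ∀ u : ℕ, u ≤ k + 1 → μ₂ {ω | Z ω = (u : ℤ) - 1} =
      ENNReal.ofReal (((k + 1).choose u : ℝ) * p ^ u * (1 - p) ^ (k + 1 - u))) (n : ℕ) :
    IdentDistrib (blockIncrement B n) Z μ μ₂ := by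
  have := hB.indep.isProbabilityMeasure
  have hmX : Measurable (blockIncrement B n) :=
    (measurable_blockIncrement fun j => Set.mem_univ (n, j)).mono (sigmaOn_le hB.measurable _)
      le_rfl
  have := Measure.isProbabilityMeasure_map (μ := μ) hmX.aemeasurable
  have := Measure.isProbabilityMeasure_map (μ := μ₂) hZ.aemeasurable
  refine ⟨hmX.aemeasurable, hZ.aemeasurable, Measure.ext_of_singleton_of_ae_mem
    ((ae_map_iff hmX.aemeasurable measurableSet_Icc).2 (ae_blockIncrement_mem_Icc hB n))
    fun d ⟨hd1, hd2⟩ => ?_⟩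
  obtain ⟨u, rfl⟩ : ∃ u : ℕ, d = u - 1 := ⟨(d + 1).toNat, by omega⟩
  rw [Measure.map_apply hmX (measurableSet_singleton _),
    Measure.map_apply hZ (measurableSet_singleton _)]
  exact (measure_blockIncrement_eq hB n u).trans (hlawZ u (by omega)).symm

lemma iIndepFun_blockIncrement (hB : IsBernoulliFamily B μ p) {e : ℕ → ℕ} (he : Injective e) :
    iIndepFun (fun t => blockIncrement B (e t)) μ :=
  hB.indep.of_measurable_sigmaOn hB.measurable (S := fun t => {c | c.1 = e t})
    (fun _ _ hab => Set.disjoint_left.2 fun _ h h' => hab (he (h.symm.trans h')))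
    fun _ => measurable_blockIncrement fun _ => rfl

lemma measure_blockIncrement_seq_mem_eq (hB : IsBernoulliFamily B μ p) {Z : ℕ → Ω₂ → ℤ}
    (hmZ : ∀ t, Measurable (Z t)) (hZ : iIndepFun Z μ₂)
    (hlawZ : ∀ t, ∀ u : ℕ, u ≤ k + 1 → μ₂ {ω | Z t ω = (u : ℤ) - 1} =
      ENNReal.ofReal (((k + 1).choose u : ℝ) * p ^ u * (1 - p) ^ (k + 1 - u)))
    {e : ℕ → ℕ} (he : Injective e) {S : Set (ℕ → ℤ)} (hS : MeasurableSet S) :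
    μ {ω | (fun t => blockIncrement B (e t) ω) ∈ S} = μ₂ {ω | (fun t => Z t ω) ∈ S} :=
  (IdentDistrib.pi (fun t => identDistrib_blockIncrement hB (hmZ t) (hlawZ t) (e t))
    (iIndepFun_blockIncrement hB he) hZ).measure_mem_eq hS

lemma measure_loss_inter_sum_erase_eq (hB : IsBernoulliFamily B μ p) (i : ℕ) (j₀ : Fin (k + 1))
    (u : ℕ) :
    μ ({ω | B (i, j₀) ω = 1} ∩ {ω | ∑ j ∈ Finset.univ.erase j₀, B (i, j) ω = u}) =
      ENNReal.ofReal p * ENNReal.ofReal (k.choose u * p ^ u * (1 - p) ^ (k - u)) := by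
  have hrow := hB.comp_injective (Prod.mk_right_injective i)
  have hind : IndepFun (fun ω => ∑ j ∈ Finset.univ.erase j₀, B (i, j) ω) (B (i, j₀)) μ := by
    simpa only [Finset.sum_fn] using
      hrow.indep.indepFun_finsetSum_of_notMem hrow.measurable (Finset.notMem_erase j₀ _)
  have hmul : μ ({ω | ∑ j ∈ Finset.univ.erase j₀, B (i, j) ω = u} ∩ {ω | B (i, j₀) ω = 1}) =
      μ {ω | ∑ j ∈ Finset.univ.erase j₀, B (i, j) ω = u} * μ {ω | B (i, j₀) ω = 1} :=
    hind.measure_inter_preimage_eq_mul _ _ (measurableSet_singleton u) (measurableSet_singleton 1)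
  rw [Set.inter_comm, hmul, hrow.measure_sum_eq, hB.measure_eq_one, mul_comm]
  simp

lemma measure_loss_inter_eq_mul (hB : IsBernoulliFamily B μ p) {i : ℕ} (hi : 1 ≤ i)
    (j₀ : Fin (k + 1)) (y u : ℕ) {S : Set (ℕ → ℤ)} (hS : MeasurableSet S) :
    μ ({ω | lossWalk B (i - 1) ω = y} ∩
        ({ω | B (i, j₀) ω = 1} ∩ {ω | ∑ j ∈ Finset.univ.erase j₀, B (i, j) ω = u}) ∩
        {ω | (fun t => blockIncrement B (i + t + 1) ω) ∈ S}) =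
      ENNReal.ofReal p * (ENNReal.ofReal (k.choose u * p ^ u * (1 - p) ^ (k - u)) *
        μ {ω | (fun t => blockIncrement B (i + t + 1) ω) ∈ S} *
        μ {ω | lossWalk B (i - 1) ω = y}) := by
  have hpast : MeasurableSet[sigmaOn B {c | c.1 ≤ i - 1}] {ω | lossWalk B (i - 1) ω = y} :=
    measurable_lossWalk _ (measurableSet_singleton _)
  have hblock : MeasurableSet[sigmaOn B {c | c.1 = i}]
      ({ω | B (i, j₀) ω = 1} ∩ {ω | ∑ j ∈ Finset.univ.erase j₀, B (i, j) ω = u}) :=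
    (measurable_sigmaOn (show (i, j₀) ∈ {c : ℕ × Fin (k + 1) | c.1 = i} from rfl)
      (measurableSet_singleton 1)).inter
      ((Finset.measurable_sum (m := sigmaOn B {c | c.1 = i}) _ fun j _ =>
        measurable_sigmaOn (show (i, j) ∈ {c : ℕ × Fin (k + 1) | c.1 = i} from rfl))
        (measurableSet_singleton u))
  have hfuture : MeasurableSet[sigmaOn B {c | i < c.1}]
      {ω | (fun t => blockIncrement B (i + t + 1) ω) ∈ S} :=
    measurable_blockIncrement_seq (fun t _ => show i < i + t + 1 by omega) hS
  have hupto : MeasurableSet[sigmaOn B {c | c.1 ≤ i}] ({ω | lossWalk B (i - 1) ω = y} ∩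
      ({ω | B (i, j₀) ω = 1} ∩ {ω | ∑ j ∈ Finset.univ.erase j₀, B (i, j) ω = u})) := by
    refine (sigmaOn_mono ?_ _ hpast).inter (sigmaOn_mono ?_ _ hblock)
    · exact fun c (hc : c.1 ≤ i - 1) => show c.1 ≤ i by omega
    · exact fun c (hc : c.1 = i) => show c.1 ≤ i from hc.le
  rw [hB.indep.measure_inter_eq_mul_of_disjoint hB.measurable
      (Set.disjoint_left.2 fun c (h : c.1 ≤ i) (h' : i < c.1) => by omega) hupto hfuture,
    hB.indep.measure_inter_eq_mul_of_disjoint hB.measurable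
      (Set.disjoint_left.2 fun c (h : c.1 ≤ i - 1) (h' : c.1 = i) => by omega) hpast hblock,
    measure_loss_inter_sum_erase_eq hB]
  ring

lemma measure_loss_inter_firstZero_inter_eq (hB : IsBernoulliFamily B μ p) {Z : ℕ → Ω₂ → ℤ}
    (hmZ : ∀ t, Measurable (Z t)) (hZ : iIndepFun Z μ₂)
    (hlawZ : ∀ t, ∀ u : ℕ, u ≤ k + 1 → μ₂ {ω | Z t ω = (u : ℤ) - 1} =
      ENNReal.ofReal (((k + 1).choose u : ℝ) * p ^ u * (1 - p) ^ (k + 1 - u)))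
    {i : ℕ} (hi : 1 ≤ i) (j₀ : Fin (k + 1)) (h y u : ℕ) :
    μ ({ω | B (i, j₀) ω = 1} ∩ {ω | firstZero (fun m => lossWalk B (i + m) ω) = h} ∩
        ({ω | lossWalk B (i - 1) ω = y} ∩ {ω | ∑ j ∈ Finset.univ.erase j₀, B (i, j) ω = u})) =
      ENNReal.ofReal p * (ENNReal.ofReal ((k.choose u : ℝ) * p ^ u * (1 - p) ^ (k - u)) *
          μ₂ {ω | firstZero (reflectedWalk ((y + u : ℕ) : ℤ) fun t => Z t ω) = h} *
          μ {ω | lossWalk B (i - 1) ω = (y : ℤ)}) := by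
  have hS := measurableSet_firstZero_reflectedWalk_eq ((y + u : ℕ) : ℤ) h
  have hlaw := measure_blockIncrement_seq_mem_eq hB hmZ hZ hlawZ (e := fun t => i + t + 1)
    (fun a b hab => by simp only at hab; omega) hS
  have hfactor := measure_loss_inter_eq_mul hB hi j₀ y u hS
  simp only [Set.mem_ofPred_eq] at hlaw hfactor
  rw [← hlaw, ← hfactor]
  congr 1
  ext ω
  simp only [Set.mem_inter_iff, Set.mem_ofPred_eq]
  constructor
  · rintro ⟨⟨hA, hD⟩, hP, hR⟩
    exact ⟨⟨hP, hA, hR⟩, lossWalk_add_eq_reflectedWalk_of_loss hi hA hP hR ▸ hD⟩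
  · rintro ⟨⟨hP, hA, hR⟩, hD⟩
    exact ⟨⟨hA, (lossWalk_add_eq_reflectedWalk_of_loss hi hA hP hR).symm ▸ hD⟩, hP, hR⟩

lemma measure_loss_inter_firstZero_eq (hB : IsBernoulliFamily B μ p) {Z : ℕ → Ω₂ → ℤ}
    (hmZ : ∀ t, Measurable (Z t)) (hZ : iIndepFun Z μ₂)
    (hlawZ : ∀ t, ∀ u : ℕ, u ≤ k + 1 → μ₂ {ω | Z t ω = (u : ℤ) - 1} =
      ENNReal.ofReal (((k + 1).choose u : ℝ) * p ^ u * (1 - p) ^ (k + 1 - u)))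
    {i : ℕ} (hi : 1 ≤ i) (j₀ : Fin (k + 1)) (h : ℕ) :
    μ ({ω | B (i, j₀) ω = 1} ∩ {ω | firstZero (fun m => lossWalk B (i + m) ω) = h}) =
      ENNReal.ofReal p * ∑' y : ℕ, ∑ u ∈ Finset.range (k + 1),
        ENNReal.ofReal ((k.choose u : ℝ) * p ^ u * (1 - p) ^ (k - u)) *
          μ₂ {ω | firstZero (reflectedWalk ((y + u : ℕ) : ℤ) fun t => Z t ω) = h} *
          μ {ω | lossWalk B (i - 1) ω = (y : ℤ)} := by
  set U : Ω → ℕ := fun ω => ∑ j ∈ Finset.univ.erase j₀, B (i, j) ω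
  set F : ℕ × ℕ → Set Ω := fun yu => {ω | lossWalk B (i - 1) ω = yu.1} ∩ {ω | U ω = yu.2}
  have hmW : ∀ n, Measurable (lossWalk B n) := fun n =>
    (measurable_lossWalk n).mono (sigmaOn_le hB.measurable _) le_rfl
  have hmU : Measurable U := Finset.measurable_sum _ fun j _ => hB.measurable (i, j)
  have hF : ∀ yu, MeasurableSet (F yu) := fun yu =>
    (hmW _ (measurableSet_singleton _)).inter (hmU (measurableSet_singleton _))
  have hdisj : Pairwise (Disjoint on F) := fun a b hab => Set.disjoint_left.2
    fun ω ⟨ha, ha'⟩ ⟨hb, hb'⟩ => hab (Prod.ext (by simp_all) (by simp_all))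
  have hE : MeasurableSet ({ω | B (i, j₀) ω = 1} ∩
      {ω | firstZero (fun m => lossWalk B (i + m) ω) = h}) :=
    (hB.measurable _ (measurableSet_singleton 1)).inter
      (measurable_pi_lambda _ (fun m => hmW (i + m)) (measurableSet_firstZero_eq h))
  have hcover : {ω | B (i, j₀) ω = 1} ∩ {ω | firstZero (fun m => lossWalk B (i + m) ω) = h} ⊆
      ⋃ yu, F yu := fun ω _ => Set.mem_iUnion.2
    ⟨((lossWalk B (i - 1) ω).toNat, U ω), by simp [F, Int.toNat_of_nonneg (lossWalk_nonneg _ _)]⟩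
  rw [measure_eq_tsum_measure_inter hF hdisj hE hcover, ENNReal.tsum_prod',
    ← ENNReal.tsum_mul_left]
  refine tsum_congr fun y => ?_
  rw [tsum_congr (measure_loss_inter_firstZero_inter_eq hB hmZ hZ hlawZ hi j₀ h y),
    tsum_eq_sum fun u hu => ?_, Finset.mul_sum]
  simp [Nat.choose_eq_zero_of_lt (by simpa using hu : k < u)]

end Probability

end Tetrys

open Tetrys

theorem stmt_9_general {Ω : Type*} [MeasurableSpace Ω] (μ : Measure Ω)
    {Ω₂ : Type*} [MeasurableSpace Ω₂] (μ₂ : Measure Ω₂) [IsProbabilityMeasure μ₂]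
    (k : ℕ) (p : ℝ) (hp0 : 0 < p) (hp1 : p < 1)
    -- the i.i.d. Bernoulli array of packet losses and the associated reflected walk
    (B : ℕ × Fin (k + 1) → Ω → ℕ)
    (hmeasB : ∀ idx, Measurable (B idx))
    (hindepB : iIndepFun B μ)
    (hBern1 : ∀ idx, μ {ω | B idx ω = 1} = ENNReal.ofReal p)
    (hBern0 : ∀ idx, μ {ω | B idx ω = 0} = ENNReal.ofReal (1 - p))
    (X : ℕ → Ω → ℤ)
    (hX : ∀ i ω, X i ω = (∑ j : Fin (k + 1), (B (i, j) ω : ℤ)) - 1)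
    (Y : ℕ → Ω → ℤ)
    (hY0 : ∀ ω, Y 0 ω = 0)
    (hYs : ∀ n ω, Y (n + 1) ω = max (Y n ω + X (n + 1) ω) 0)
    -- an independent copy of the reflected walk, started at `y`, with its hitting times of 0
    (X₂ : ℕ → Ω₂ → ℤ)
    (hmeasX₂ : ∀ n, Measurable (X₂ n))
    (hindepX₂ : iIndepFun X₂ μ₂)
    (hdistX₂ : ∀ n, ∀ u : ℕ, u ≤ k + 1 →
      μ₂ {ω | X₂ n ω = (u : ℤ) - 1} =
        ENNReal.ofReal (((k + 1).choose u : ℝ) * p ^ u * (1 - p) ^ (k + 1 - u)))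
    (Y₂ : ℕ → ℕ → Ω₂ → ℤ)
    (hY₂0 : ∀ y ω, Y₂ y 0 ω = (y : ℤ))
    (hY₂s : ∀ y n ω, Y₂ y (n + 1) ω = max (Y₂ y n ω + X₂ n ω) 0)
    (H : ℕ → Ω₂ → ℕ∞)
    (hH : ∀ y ω, H y ω = sInf {n : ℕ∞ | ∃ h : ℕ, n = (h : ℕ∞) ∧ Y₂ y h ω = 0})
    -- the decoding delay of the packet sent in position `j` of block `i`
    (i : ℕ) (hi : 1 ≤ i)
    (j : ℕ) (hj : j < k)
    (D : Ω → ℕ∞)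
    (hD : ∀ ω, D ω = ((k - j : ℕ) : ℕ∞) +
      ((k + 1 : ℕ) : ℕ∞) * sInf {n : ℕ∞ | ∃ m : ℕ, n = (m : ℕ∞) ∧ Y (i + m) ω = 0}) :
    ∀ h : ℕ,
      μ[|{ω | B (i, ⟨j, Nat.lt_succ_of_lt hj⟩) ω = 1}]
          {ω | D ω = ((k - j + h * (k + 1) : ℕ) : ℕ∞)} =
        ∑' y : ℕ, ∑ u ∈ Finset.range (k + 1),
          ENNReal.ofReal ((k.choose u : ℝ) * p ^ u * (1 - p) ^ (k - u)) *
            μ₂ {ω | H (y + u) ω = (h : ℕ∞)} *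
            μ {ω | Y (i - 1) ω = (y : ℤ)} := by
  intro h
  obtain rfl : X = blockIncrement B := funext₂ hX
  obtain rfl : Y = lossWalk B := funext₂ fun n ω =>
    congrFun (eq_reflectedWalk (W := (Y · ω)) (hY0 ω) fun n => hYs n ω) n
  obtain rfl : H = fun (y : ℕ) ω => firstZero (reflectedWalk y fun t => X₂ t ω) :=
    funext₂ fun y ω => (hH y ω).trans <|
      congrArg firstZero (eq_reflectedWalk (W := (Y₂ y · ω)) (hY₂0 y ω) fun n => hY₂s y n ω)
  have hB : IsBernoulliFamily B μ p := ⟨hp0.le, hp1.le, hmeasB, hindepB, hBern1, hBern0⟩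
  have hDset : {ω | D ω = ((k - j + h * (k + 1) : ℕ) : ℕ∞)} =
      {ω | firstZero (fun m => lossWalk B (i + m) ω) = h} := by
    ext ω
    rw [Set.mem_ofPred_eq, Set.mem_ofPred_eq, hD ω]
    exact ENat.natCast_add_mul_eq_natCast_iff k.succ_ne_zero
  have hA : MeasurableSet {ω | B (i, ⟨j, Nat.lt_succ_of_lt hj⟩) ω = 1} :=
    hmeasB _ (measurableSet_singleton 1)
  beta_reduce
  rw [hDset, cond_apply hA,
    measure_loss_inter_firstZero_eq hB hmeasX₂ hindepX₂ hdistX₂ hi, hBern1, ← mul_assoc,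
    ENNReal.inv_mul_cancel (ENNReal.ofReal_pos.2 hp0).ne' ENNReal.ofReal_ne_top, one_mul]

/-- Distribution of the decoding delay of a packet sent in position `j` of block `i`:
`P(D_j = (k-j) + h(k+1) | B_{i,j} = 1)
  = ∑_{y≥0} ∑_{u=0}^{k} C(k,u) pᵘ (1-p)^{k-u} P(H_{y+u} = h) P(Y_{i-1} = y)`,
where `H` is the hitting time of 0 of an independent copy of the reflected walk. -/
theorem stmt_9 {Ω : Type*} [MeasurableSpace Ω] (μ : Measure Ω) [IsProbabilityMeasure μ]
    {Ω₂ : Type*} [MeasurableSpace Ω₂] (μ₂ : Measure Ω₂) [IsProbabilityMeasure μ₂]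
    (k : ℕ) (hk : 1 ≤ k) (p : ℝ) (hp0 : 0 < p) (hp1 : p < 1)
    -- the i.i.d. Bernoulli array of packet losses and the associated reflected walk
    (B : ℕ × Fin (k + 1) → Ω → ℕ)
    (hmeasB : ∀ idx, Measurable (B idx))
    (hindepB : iIndepFun B μ)
    (hBern1 : ∀ idx, μ {ω | B idx ω = 1} = ENNReal.ofReal p)
    (hBern0 : ∀ idx, μ {ω | B idx ω = 0} = ENNReal.ofReal (1 - p))
    (X : ℕ → Ω → ℤ)
    (hX : ∀ i ω, X i ω = (∑ j : Fin (k + 1), (B (i, j) ω : ℤ)) - 1)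
    (Y : ℕ → Ω → ℤ)
    (hY0 : ∀ ω, Y 0 ω = 0)
    (hYs : ∀ n ω, Y (n + 1) ω = max (Y n ω + X (n + 1) ω) 0)
    -- an independent copy of the reflected walk, started at `y`, with its hitting times of 0
    (X₂ : ℕ → Ω₂ → ℤ)
    (hmeasX₂ : ∀ n, Measurable (X₂ n))
    (hindepX₂ : iIndepFun X₂ μ₂)
    (hdistX₂ : ∀ n, ∀ u : ℕ, u ≤ k + 1 →
      μ₂ {ω | X₂ n ω = (u : ℤ) - 1} =
        ENNReal.ofReal (((k + 1).choose u : ℝ) * p ^ u * (1 - p) ^ (k + 1 - u)))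
    (Y₂ : ℕ → ℕ → Ω₂ → ℤ)
    (hY₂0 : ∀ y ω, Y₂ y 0 ω = (y : ℤ))
    (hY₂s : ∀ y n ω, Y₂ y (n + 1) ω = max (Y₂ y n ω + X₂ n ω) 0)
    (H : ℕ → Ω₂ → ℕ∞)
    (hH : ∀ y ω, H y ω = sInf {n : ℕ∞ | ∃ h : ℕ, n = (h : ℕ∞) ∧ Y₂ y h ω = 0})
    -- the decoding delay of the packet sent in position `j` of block `i`
    (i : ℕ) (hi : 1 ≤ i)
    (j : ℕ) (hj : j < k)
    (D : Ω → ℕ∞)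
    (hD : ∀ ω, D ω = ((k - j : ℕ) : ℕ∞) +
      ((k + 1 : ℕ) : ℕ∞) * sInf {n : ℕ∞ | ∃ m : ℕ, n = (m : ℕ∞) ∧ Y (i + m) ω = 0}) :
    ∀ h : ℕ,
      μ[|{ω | B (i, ⟨j, Nat.lt_succ_of_lt hj⟩) ω = 1}]
          {ω | D ω = ((k - j + h * (k + 1) : ℕ) : ℕ∞)} =
        ∑' y : ℕ, ∑ u ∈ Finset.range (k + 1),
          ENNReal.ofReal ((k.choose u : ℝ) * p ^ u * (1 - p) ^ (k - u)) *
            μ₂ {ω | H (y + u) ω = (h : ℕ∞)} *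
            μ {ω | Y (i - 1) ω = (y : ℤ)} :=
  stmt_9_general μ μ₂ k p hp0 hp1 B hmeasB hindepB hBern1 hBern0 X hX Y hY0 hYs X₂ hmeasX₂ hindepX₂
    hdistX₂ Y₂ hY₂0 hY₂s H hH i hi j hj D hD
end

section
/- (Block increment given the position of the first loss.) Let k ≥ 1 be an integer and p ∈ (0,1). Let (B_{i,j})_{i≥1, 0≤j≤k} be an i.i.d. array of Bernoulli(p) random variables, X_i = (∑_{j=0}^{k} B_{i,j}) − 1, and Y_0 = 0, Y_n = max(Y_{n−1} + X_n, 0). Fix i ≥ 1 with P(Y_{i−1} = 0) > 0, and let F_i = min{ j ∈ {0, …, k−1} : B_{i,j} = 1 } (defined on the event that block i contains at least one lost source packet). Then for every j ∈ {0, …, k−1} and every u ∈ {0, …, k−j}: P(Y_i = u | Y_{i−1} = 0, F_i = j) = C(k−j, u) p^u (1−p)^{k−j−u}. -/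
open MeasureTheory ProbabilityTheory Finset
open scoped ENNReal

/-!
On `{Y_{i-1} = 0}` we have `Y_i = max (∑_l B_{i,l} - 1) 0`. Almost surely every `B` is `0` or `1`,
so if the first loss of block `i` is at position `j`, the positions before `j` contribute nothing
and the loss at `j` cancels the `-1`: `Y_i` is the number of losses among the `k - j` positions
after `j`. This count is a function of the variables `B_{i,l}`, `l > j`, whereas the conditioning
event is determined by the earlier blocks and the positions `≤ j` of block `i`. By independence
the conditional law is the law of a sum of `k - j` independent Bernoulli(`p`) variables, which is
binomial: the sum equals `u` exactly on the disjoint union, over the `u`-subsets `T` of the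
positions, of the events `{B_l = 1 ↔ l ∈ T}`, each of probability `pᵘ (1-p)^(k-j-u)`.
-/

lemma Finset.sum_eq_add_sum_Ioi_of_eq_zero {α M : Type*} [Fintype α] [LinearOrder α]
    [LocallyFiniteOrderTop α] [LocallyFiniteOrderBot α] [AddCommMonoid M] {f : α → M} {j : α}
    (hlt : ∀ l < j, f l = 0) : ∑ l, f l = f j + ∑ l ∈ Ioi j, f l := by
  classical
  have hle : univ.filter (¬ j < ·) = insert j (Iio j) := by
    ext l; simp [le_iff_lt_or_eq, or_comm]
  rw [← sum_filter_not_add_sum_filter univ (j < ·), filter_lt_eq_Ioi, hle,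
    sum_insert notMem_Iio_self, sum_eq_zero fun l hl => hlt l (mem_Iio.1 hl), add_zero]

lemma max_sum_sub_one_eq_sum_Ioi {κ : Type*} [Fintype κ] [LinearOrder κ]
    [LocallyFiniteOrderTop κ] [LocallyFiniteOrderBot κ] {f : κ → ℕ} {j : κ} (hj : f j = 1)
    (hlt : ∀ l < j, f l ≠ 1) (hle : ∀ l, f l ≤ 1) :
    max (∑ l, (f l : ℤ) - 1) 0 = ((∑ l ∈ Ioi j, f l : ℕ) : ℤ) := by
  have hzero : ∀ l < j, f l = 0 := fun l hl => by have := hlt l hl; have := hle l; omega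
  rw [← Nat.cast_sum, Finset.sum_eq_add_sum_Ioi_of_eq_zero hzero, hj, Nat.cast_add, Nat.cast_one]
  omega

lemma Nat.nonempty_and_sInf_eq_iff {S : Set ℕ} {j : ℕ} :
    (S.Nonempty ∧ sInf S = j) ↔ j ∈ S ∧ ∀ l < j, l ∉ S := by
  constructor
  · rintro ⟨hS, rfl⟩
    exact ⟨Nat.sInf_mem hS, fun l hl hlS => (Nat.sInf_le hlS).not_gt hl⟩
  · rintro ⟨hj, hmin⟩
    exact ⟨⟨j, hj⟩, le_antisymm (Nat.sInf_le hj)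
      (le_of_not_gt fun h => hmin _ h (Nat.sInf_mem ⟨j, hj⟩))⟩

namespace ProbabilityTheory

variable {Ω ι κ : Type*} {mΩ : MeasurableSpace Ω} {μ : Measure Ω} {p : ℝ}

lemma cond_eq_of_indep [IsFiniteMeasure μ] {m₁ m₂ : MeasurableSpace Ω} (h : Indep m₁ m₂ μ)
    (hm₁ : m₁ ≤ mΩ) {s t : Set Ω} (hs : MeasurableSet[m₁] s) (ht : MeasurableSet[m₂] t)
    (hμs : μ s ≠ 0) : μ[t | s] = μ t := by
  rw [cond_apply (hm₁ s hs), (Indep_iff _ _ _).1 h s t hs ht,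
    ENNReal.inv_mul_cancel_left hμs (measure_ne_top μ s)]

section Generated

variable {β : Type*} [MeasurableSpace β]

abbrev generatedBy (B : ι → Ω → β) (S : Set ι) : MeasurableSpace Ω :=
  ⨆ idx ∈ S, MeasurableSpace.comap (B idx) inferInstance

variable {B : ι → Ω → β} {S T : Set ι}

lemma measurable_generatedBy {idx : ι} (h : idx ∈ S) : Measurable[generatedBy B S] (B idx) :=
  Measurable.of_comap_le <|
    le_iSup₂ (f := fun idx (_ : idx ∈ S) => MeasurableSpace.comap (B idx) inferInstance) idx h

lemma generatedBy_mono (h : S ⊆ T) : generatedBy B S ≤ generatedBy B T :=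
  biSup_mono h

lemma generatedBy_le (hB : ∀ idx, Measurable (B idx)) : generatedBy B S ≤ mΩ :=
  iSup₂_le fun idx _ => (hB idx).comap_le

lemma iIndepFun.indep_generatedBy (hind : iIndepFun B μ) (hB : ∀ idx, Measurable (B idx))
    (hST : Disjoint S T) : Indep (generatedBy B S) (generatedBy B T) μ :=
  indep_iSup_of_disjoint (fun idx => (hB idx).comap_le) ((iIndepFun_iff_iIndep _ _ _).1 hind) hST

end Generated

lemma ae_le_one_of_bernoulli [IsProbabilityMeasure μ] {f : Ω → ℕ} (hf : Measurable f)
    (hp0 : 0 ≤ p) (hp1 : p ≤ 1)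
    (h1 : μ {ω | f ω = 1} = .ofReal p) (h0 : μ {ω | f ω = 0} = .ofReal (1 - p)) :
    ∀ᵐ ω ∂μ, f ω ≤ 1 := by
  have hsplit : {ω | f ω ≤ 1} = {ω | f ω = 0} ∪ {ω | f ω = 1} := by
    ext ω; simp only [Set.mem_ofPred_eq, Set.mem_union]; omega
  have hdisj : Disjoint {ω | f ω = 0} {ω | f ω = 1} :=
    Set.disjoint_left.2 fun ω h0 h1 => by simp_all
  rw [ae_iff_measure_eq (p := (f · ≤ 1)) (hf measurableSet_Iic).nullMeasurableSet, hsplit,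
    measure_union hdisj (hf (measurableSet_singleton 1)), h0, h1,
    ← ENNReal.ofReal_add (by linarith) hp0, measure_univ]
  norm_num

section Bernoulli

variable {b : ι → Ω → ℕ}
  (h1 : ∀ l, μ {ω | b l ω = 1} = .ofReal p) (h0 : ∀ l, μ {ω | b l ω = 0} = .ofReal (1 - p))
include h1 h0

lemma measure_biInter_preimage_ite (hb : iIndepFun b μ) [DecidableEq ι] {s T : Finset ι}
    (hT : T ⊆ s) :
    μ (⋂ l ∈ s, b l ⁻¹' {if l ∈ T then 1 else 0}) =
      .ofReal p ^ #T * .ofReal (1 - p) ^ (#s - #T) := by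
  have hfactor (l : ι) : μ (b l ⁻¹' {if l ∈ T then 1 else 0}) =
      if l ∈ T then .ofReal p else .ofReal (1 - p) := by
    split_ifs
    exacts [h1 l, h0 l]
  rw [hb.measure_inter_preimage_eq_mul s fun _ _ => measurableSet_singleton _,
    prod_congr rfl fun l _ => hfactor l, prod_ite, prod_const, prod_const, filter_mem_eq_inter,
    inter_eq_right.2 hT, filter_notMem_eq_sdiff, card_sdiff_of_subset hT]

lemma measure_sum_eq_binomial (hb : iIndepFun b μ) (hbm : ∀ l, Measurable (b l))
    (hp0 : 0 ≤ p) (hp1 : p ≤ 1) (s : Finset ι) (u : ℕ) :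
    μ {ω | ∑ l ∈ s, b l ω = u} = .ofReal ((#s).choose u * p ^ u * (1 - p) ^ (#s - u)) := by
  classical
  have := hb.isProbabilityMeasure
  set cyl : Finset ι → Set Ω := fun T => ⋂ l ∈ s, b l ⁻¹' {if l ∈ T then 1 else 0}
  have hcyl {T : Finset ι} (hT : T ⊆ s) {ω : Ω} (hω : ω ∈ cyl T) : s.filter (b · ω = 1) = T := by
    simp only [cyl, Set.mem_iInter, Set.mem_preimage, Set.mem_singleton_iff] at hω
    ext l
    by_cases hl : l ∈ T
    · simpa [hl, hT hl] using hω l (hT hl)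
    · simp only [mem_filter, hl, iff_false, not_and]
      intro hls
      simp [hω l hls, hl]
  have hae : {ω | ∑ l ∈ s, b l ω = u} =ᵐ[μ] ⋃ T ∈ powersetCard u s, cyl T := by
    have hle : ∀ᵐ ω ∂μ, ∀ l ∈ s, b l ω ≤ 1 := (Filter.eventually_all_finset s).2
      fun l _ => ae_le_one_of_bernoulli (hbm l) hp0 hp1 (h1 l) (h0 l)
    filter_upwards [hle] with ω hω
    have hsum : ∑ l ∈ s, b l ω = #(s.filter (b · ω = 1)) := by
      rw [card_filter]
      exact sum_congr rfl fun l hl => by have := hω l hl; split_ifs <;> omega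
    have hmem : ω ∈ cyl (s.filter (b · ω = 1)) := by
      simp only [cyl, Set.mem_iInter, Set.mem_preimage, Set.mem_singleton_iff, mem_filter]
      intro l hl
      by_cases h : b l ω = 1
      · simp [hl, h]
      · simp only [hl, h, and_false, if_false]
        have := hω l hl
        omega
    show (ω ∈ {ω | ∑ l ∈ s, b l ω = u}) = (ω ∈ ⋃ T ∈ powersetCard u s, cyl T)
    simp only [eq_iff_iff, Set.mem_iUnion, mem_powersetCard, exists_prop, Set.mem_ofPred_eq]
    constructor
    · intro h
      exact ⟨_, ⟨filter_subset _ _, hsum ▸ h⟩, hmem⟩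
    · rintro ⟨T, ⟨hT, rfl⟩, hωT⟩
      rw [hsum, hcyl hT hωT]
  have hdisj : (powersetCard u s : Set (Finset ι)).PairwiseDisjoint cyl :=
    fun T hT T' hT' hne => Set.disjoint_left.2 fun ω hω hω' =>
      hne ((hcyl (mem_powersetCard.1 hT).1 hω).symm.trans (hcyl (mem_powersetCard.1 hT').1 hω'))
  have hcylm (T : Finset ι) : MeasurableSet (cyl T) :=
    s.measurableSet_biInter fun l _ => hbm l (measurableSet_singleton _)
  have hval : ∀ T ∈ powersetCard u s, μ (cyl T) = .ofReal p ^ u * .ofReal (1 - p) ^ (#s - u) := by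
    intro T hT
    obtain ⟨hTs, rfl⟩ := mem_powersetCard.1 hT
    exact measure_biInter_preimage_ite h1 h0 hb hTs
  rw [measure_congr hae, measure_biUnion_finset hdisj fun T _ => hcylm T, sum_congr rfl hval,
    sum_const, card_powersetCard, nsmul_eq_mul, ENNReal.ofReal_mul (by positivity),
    ENNReal.ofReal_mul (by positivity), ENNReal.ofReal_natCast, ENNReal.ofReal_pow hp0,
    ENNReal.ofReal_pow (by linarith), mul_assoc]

end Bernoulli

section FirstOne

variable [LinearOrder κ]

def firstOneAt (b : κ → Ω → ℕ) (j : κ) : Set Ω := {ω | b j ω = 1 ∧ ∀ l < j, b l ω ≠ 1}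

variable {b : κ → Ω → ℕ} {j : κ}

lemma mem_firstOneAt_iff_exists_and_sInf_eq {k j : ℕ} (hj : j < k) (b : Fin (k + 1) → Ω → ℕ)
    (ω : Ω) : ω ∈ firstOneAt b ⟨j, Nat.lt_succ_of_lt hj⟩ ↔
      (∃ j' : ℕ, ∃ h : j' < k, b ⟨j', Nat.lt_succ_of_lt h⟩ ω = 1) ∧
        sInf {j' : ℕ | ∃ h : j' < k, b ⟨j', Nat.lt_succ_of_lt h⟩ ω = 1} = j := by
  refine (Nat.nonempty_and_sInf_eq_iff.trans ⟨?_, ?_⟩).symm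
  · rintro ⟨⟨_, hbj⟩, hmin⟩
    exact ⟨hbj, fun l hl hbl => hmin l hl ⟨by omega, hbl⟩⟩
  · rintro ⟨hbj, hmin⟩
    exact ⟨⟨hj, hbj⟩, fun l hl ⟨_, hbl⟩ => hmin _ hl hbl⟩

lemma measurableSet_firstOneAt [Countable κ] {m : MeasurableSpace Ω}
    (hb : ∀ l ≤ j, Measurable[m] (b l)) : MeasurableSet[m] (firstOneAt b j) :=
  Measurable.setOf <| ((hb j le_rfl).eq_const 1).and <|
    Measurable.forall fun l => Measurable.forall fun hl => ((hb l hl.le).eq_const 1).not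

lemma measure_firstOneAt_ne_zero [LocallyFiniteOrderBot κ] (hb : iIndepFun b μ)
    (h1 : ∀ l, μ {ω | b l ω = 1} = .ofReal p) (h0 : ∀ l, μ {ω | b l ω = 0} = .ofReal (1 - p))
    (hp0 : 0 < p) (hp1 : p < 1) (j : κ) : μ (firstOneAt b j) ≠ 0 := by
  classical
  have hsub : ⋂ l ∈ Iic j, b l ⁻¹' {if l ∈ ({j} : Finset κ) then 1 else 0} ⊆ firstOneAt b j := by
    intro ω hω
    simp only [Set.mem_iInter, Set.mem_preimage, Set.mem_singleton_iff, mem_Iic,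
      Finset.mem_singleton] at hω
    refine ⟨by simpa using hω j le_rfl, fun l hl => ?_⟩
    simp [hω l hl.le, hl.ne]
  refine (measure_pos_of_superset hsub ?_).ne'
  rw [measure_biInter_preimage_ite h1 h0 hb (singleton_subset_iff.2 (mem_Iic.2 le_rfl))]
  exact mul_ne_zero (pow_ne_zero _ (by simpa using hp0))
    (pow_ne_zero _ (by simpa using hp1))

lemma cond_sum_Ioi_firstOneAt_eq_binomial [LocallyFiniteOrderBot κ] [LocallyFiniteOrderTop κ]
    [Countable κ] {B : ι → Ω → ℕ} (hB : iIndepFun B μ) (hBm : ∀ idx, Measurable (B idx))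
    (h1 : ∀ idx, μ {ω | B idx ω = 1} = .ofReal p)
    (h0 : ∀ idx, μ {ω | B idx ω = 0} = .ofReal (1 - p)) (hp0 : 0 < p) (hp1 : p < 1)
    {g : κ → ι} (hg : g.Injective) {S : Set ι} (hS : Disjoint S (Set.range g)) {A : Set Ω}
    (hA : MeasurableSet[generatedBy B S] A) (hμA : μ A ≠ 0) (j : κ) (u : ℕ) :
    μ[{ω | ∑ l ∈ Ioi j, B (g l) ω = u} | A ∩ firstOneAt (fun l => B (g l)) j] =
      .ofReal ((#(Ioi j)).choose u * p ^ u * (1 - p) ^ (#(Ioi j) - u)) := by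
  have := hB.isProbabilityMeasure
  have hb : iIndepFun (fun l => B (g l)) μ := hB.precomp hg
  have hC : MeasurableSet[generatedBy B (g '' Set.Iic j)] (firstOneAt (fun l => B (g l)) j) :=
    measurableSet_firstOneAt fun l hl => measurable_generatedBy ⟨l, hl, rfl⟩
  have htail : MeasurableSet[generatedBy B (g '' Set.Ioi j)] {ω | ∑ l ∈ Ioi j, B (g l) ω = u} :=
    (Finset.measurable_sum _ fun l hl =>
      measurable_generatedBy (B := B) (S := g '' Set.Ioi j) ⟨l, mem_Ioi.1 hl, rfl⟩)
      (measurableSet_singleton u)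
  have hpos : μ (A ∩ firstOneAt (fun l => B (g l)) j) ≠ 0 := by
    rw [(Indep_iff _ _ _).1 (hB.indep_generatedBy hBm (hS.mono_right (Set.image_subset_range _ _)))
      _ _ hA hC]
    exact mul_ne_zero hμA (measure_firstOneAt_ne_zero hb (fun _ => h1 _) (fun _ => h0 _) hp0 hp1 j)
  have hdisj : Disjoint (S ∪ g '' Set.Iic j) (g '' Set.Ioi j) :=
    Disjoint.union_left (hS.mono_right (Set.image_subset_range _ _))
      ((Set.disjoint_image_iff hg).2 (Set.Iic_disjoint_Ioi le_rfl))
  rw [cond_eq_of_indep (hB.indep_generatedBy hBm hdisj) (generatedBy_le hBm)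
      ((generatedBy_mono (T := S ∪ g '' Set.Iic j) Set.subset_union_left _ hA).inter
        (generatedBy_mono (T := S ∪ g '' Set.Iic j) Set.subset_union_right _ hC)) htail hpos,
    measure_sum_eq_binomial (fun _ => h1 _) (fun _ => h0 _) hb (fun _ => hBm _) hp0.le hp1.le]

end FirstOne

lemma measurable_reflectedWalk {F : ℕ → MeasurableSpace Ω} (hF : Monotone F)
    {X Y : ℕ → Ω → ℤ} (hX : ∀ n, Measurable[F n] (X n)) (hY0 : ∀ ω, Y 0 ω = 0)
    (hYs : ∀ n ω, Y (n + 1) ω = max (Y n ω + X (n + 1) ω) 0) (n : ℕ) :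
    Measurable[F n] (Y n) := by
  induction n with
  | zero => rw [funext hY0]; exact measurable_const
  | succ n ih =>
    rw [funext (hYs n)]
    exact ((ih.mono (hF n.le_succ) le_rfl).add (hX _)).max measurable_const

section ReflectedWalk

variable [Fintype κ] {B : ℕ × κ → Ω → ℕ} {X Y : ℕ → Ω → ℤ}
  (hX : ∀ i ω, X i ω = ∑ l, (B (i, l) ω : ℤ) - 1)
  (hYs : ∀ n ω, Y (n + 1) ω = max (Y n ω + X (n + 1) ω) 0)
include hX hYs

lemma measurable_reflectedWalk_generatedBy (hY0 : ∀ ω, Y 0 ω = 0) (n : ℕ) :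
    Measurable[generatedBy B {idx | idx.1 ≤ n}] (Y n) := by
  refine measurable_reflectedWalk (F := fun m => generatedBy B {idx | idx.1 ≤ m})
    (fun _ _ h => generatedBy_mono fun _ hidx => le_trans hidx h) (fun m => ?_) hY0 hYs n
  rw [funext (hX m)]
  exact (Finset.measurable_sum _ fun l _ => (measurable_from_top (f := ((↑) : ℕ → ℤ))).comp
    (measurable_generatedBy (B := B) (le_refl m))).sub_const 1

lemma reflectedWalk_succ_ae_eq_sum_Ioi [LinearOrder κ] [LocallyFiniteOrderTop κ]
    [LocallyFiniteOrderBot κ] {n : ℕ} (hle : ∀ᵐ ω ∂μ, ∀ l, B (n + 1, l) ω ≤ 1) (j : κ) (u : ℕ) :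
    ({ω | Y n ω = 0} ∩ firstOneAt (fun l => B (n + 1, l)) j ∩ {ω | Y (n + 1) ω = u} : Set Ω)
      =ᵐ[μ] ({ω | Y n ω = 0} ∩ firstOneAt (fun l => B (n + 1, l)) j ∩
        {ω | ∑ l ∈ Ioi j, B (n + 1, l) ω = u} : Set Ω) := by
  filter_upwards [hle] with ω hle
  refine propext (and_congr_right fun hω => ?_)
  rw [Set.mem_ofPred_eq, Set.mem_ofPred_eq, hYs, hX, hω.1, zero_add,
    max_sum_sub_one_eq_sum_Ioi (f := fun l => B (n + 1, l) ω) hω.2.1 hω.2.2 hle, Nat.cast_inj]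

end ReflectedWalk

end ProbabilityTheory

theorem stmt_11_general {Ω : Type*} [MeasurableSpace Ω] (μ : Measure Ω) [IsProbabilityMeasure μ]
    (k : ℕ) (p : ℝ) (hp0 : 0 < p) (hp1 : p < 1)
    (B : ℕ × Fin (k + 1) → Ω → ℕ)
    (hmeas : ∀ idx, Measurable (B idx))
    (hindep : iIndepFun B μ)
    (hBern1 : ∀ idx, μ {ω | B idx ω = 1} = ENNReal.ofReal p)
    (hBern0 : ∀ idx, μ {ω | B idx ω = 0} = ENNReal.ofReal (1 - p))
    (X : ℕ → Ω → ℤ)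
    (hX : ∀ i ω, X i ω = (∑ j : Fin (k + 1), (B (i, j) ω : ℤ)) - 1)
    (Y : ℕ → Ω → ℤ)
    (hY0 : ∀ ω, Y 0 ω = 0)
    (hYs : ∀ n ω, Y (n + 1) ω = max (Y n ω + X (n + 1) ω) 0)
    (i : ℕ) (hi : 1 ≤ i)
    (hipos : 0 < μ {ω | Y (i - 1) ω = 0})
    (Fi : Ω → ℕ)
    (hFi : ∀ ω, Fi ω = sInf {j : ℕ | ∃ hjk : j < k, B (i, ⟨j, Nat.lt_succ_of_lt hjk⟩) ω = 1}) :
    ∀ j : ℕ, j < k → ∀ u : ℕ, u ≤ k - j →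
      μ[|{ω | Y (i - 1) ω = 0 ∧
            (∃ j' : ℕ, ∃ hj'k : j' < k, B (i, ⟨j', Nat.lt_succ_of_lt hj'k⟩) ω = 1) ∧
            Fi ω = j}]
          {ω | Y i ω = (u : ℤ)} =
        ENNReal.ofReal (((k - j).choose u : ℝ) * p ^ u * (1 - p) ^ (k - j - u)) := by
  intro j hjk u _
  obtain ⟨n, rfl⟩ : ∃ n, i = n + 1 := ⟨i - 1, by omega⟩
  rw [Nat.add_sub_cancel] at hipos ⊢
  set jf : Fin (k + 1) := ⟨j, Nat.lt_succ_of_lt hjk⟩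
  have hevent : {ω | Y n ω = 0 ∧
      (∃ j' : ℕ, ∃ hj'k : j' < k, B (n + 1, ⟨j', Nat.lt_succ_of_lt hj'k⟩) ω = 1) ∧ Fi ω = j} =
      {ω | Y n ω = 0} ∩ firstOneAt (fun l => B (n + 1, l)) jf := by
    ext ω
    rw [Set.mem_ofPred_eq, hFi ω]
    exact and_congr_right'
      (mem_firstOneAt_iff_exists_and_sInf_eq hjk (fun l => B (n + 1, l)) ω).symm
  have hA : MeasurableSet[generatedBy B {idx | idx.1 ≤ n}] {ω | Y n ω = 0} :=
    measurable_reflectedWalk_generatedBy hX hYs hY0 n (measurableSet_singleton 0)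
  have hACm : MeasurableSet ({ω | Y n ω = 0} ∩ firstOneAt (fun l => B (n + 1, l)) jf) :=
    (generatedBy_le hmeas _ hA).inter (measurableSet_firstOneAt fun l _ => hmeas (n + 1, l))
  have hle : ∀ᵐ ω ∂μ, ∀ l, B (n + 1, l) ω ≤ 1 := ae_all_iff.2 fun l =>
    ae_le_one_of_bernoulli (hmeas (n + 1, l)) hp0.le hp1.le (hBern1 _) (hBern0 _)
  have hdisj : Disjoint {idx : ℕ × Fin (k + 1) | idx.1 ≤ n} (Set.range (Prod.mk (n + 1))) :=
    Set.disjoint_left.2 fun idx h ⟨l, hl⟩ => by subst hl; simp at h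
  rw [hevent, cond_apply hACm, measure_congr (reflectedWalk_succ_ae_eq_sum_Ioi hX hYs hle jf u),
    ← cond_apply hACm, cond_sum_Ioi_firstOneAt_eq_binomial hindep hmeas hBern1 hBern0 hp0 hp1
      (Prod.mk_right_injective (n + 1)) hdisj hA hipos.ne' jf u, Fin.card_Ioi]
  simp [jf]

/-- Block increment given the position of the first loss: if the chain is in state 0 at the end
of block `i-1` and the first lost source packet of block `i` is at position `j`, then
`P(Y_i = u | Y_{i-1} = 0, F_i = j) = C(k-j, u) pᵘ (1-p)^{k-j-u}`. -/
theorem stmt_11 {Ω : Type*} [MeasurableSpace Ω] (μ : Measure Ω) [IsProbabilityMeasure μ]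
    (k : ℕ) (hk : 1 ≤ k) (p : ℝ) (hp0 : 0 < p) (hp1 : p < 1)
    (B : ℕ × Fin (k + 1) → Ω → ℕ)
    (hmeas : ∀ idx, Measurable (B idx))
    (hindep : iIndepFun B μ)
    (hBern1 : ∀ idx, μ {ω | B idx ω = 1} = ENNReal.ofReal p)
    (hBern0 : ∀ idx, μ {ω | B idx ω = 0} = ENNReal.ofReal (1 - p))
    (X : ℕ → Ω → ℤ)
    (hX : ∀ i ω, X i ω = (∑ j : Fin (k + 1), (B (i, j) ω : ℤ)) - 1)
    (Y : ℕ → Ω → ℤ)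
    (hY0 : ∀ ω, Y 0 ω = 0)
    (hYs : ∀ n ω, Y (n + 1) ω = max (Y n ω + X (n + 1) ω) 0)
    (i : ℕ) (hi : 1 ≤ i)
    (hipos : 0 < μ {ω | Y (i - 1) ω = 0})
    (Fi : Ω → ℕ)
    (hFi : ∀ ω, Fi ω = sInf {j : ℕ | ∃ hjk : j < k, B (i, ⟨j, Nat.lt_succ_of_lt hjk⟩) ω = 1}) :
    ∀ j : ℕ, j < k → ∀ u : ℕ, u ≤ k - j →
      μ[|{ω | Y (i - 1) ω = 0 ∧
            (∃ j' : ℕ, ∃ hj'k : j' < k, B (i, ⟨j', Nat.lt_succ_of_lt hj'k⟩) ω = 1) ∧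
            Fi ω = j}]
          {ω | Y i ω = (u : ℤ)} =
        ENNReal.ofReal (((k - j).choose u : ℝ) * p ^ u * (1 - p) ^ (k - j - u)) :=
  stmt_11_general μ k p hp0 hp1 B hmeas hindep hBern1 hBern0 X hX Y hY0 hYs i hi hipos Fi hFi
end

section
/- (All states positive recurrent.) Let k ≥ 1 be an integer and p ∈ (0, 1/(k+1)). Let (X_n)_{n≥1} be i.i.d. random variables with X_n + 1 distributed Binomial(k+1, p), and for each integer i ≥ 0 let Y^{(i)} be the reflected random walk Y^{(i)}_0 = i, Y^{(i)}_n = max(Y^{(i)}_{n−1} + X_n, 0). Then every state is positive recurrent: for every i ≥ 0, the first return time T_i = inf{ n ≥ 1 : Y^{(i)}_n = i } satisfies E[T_i] < ∞. -/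
/-!
If the walk started at `i` has not come back to `i` by time `n`, let `s ≤ n` be the last time it
was at or below `i`. Steps are at least `-1`, so the walk cannot cross `i` downwards: it stayed
strictly below `i` on `[1, s]`, and above `i` (hence unreflected) after `s`, so the increments
`X s, …, X (n-1)` have a nonnegative sum. These two events depend on disjoint blocks of
increments. Staying below `i` for `s` steps is geometrically unlikely in `s`, since a run of
`w ≥ i / k` maximal steps `k` would lift the walk to `i`; a nonnegative sum of `n - s` increments of
negative mean is geometrically unlikely in `n - s` by a Chernoff bound. Hence `P(T_i > n)` is
bounded by the convolution of two summable sequences, and `E[T_i] = ∑ₙ P(T_i > n) < ∞`.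
-/

open MeasureTheory ProbabilityTheory Finset Function
open scoped ENNReal

def reflectedWalk (y : ℤ) (x : ℕ → ℤ) : ℕ → ℤ
  | 0 => y
  | m + 1 => max (reflectedWalk y x m + x m) 0

section ReflectedWalk

variable {y : ℤ} {x : ℕ → ℤ}

lemma reflectedWalk_nonneg (hy : 0 ≤ y) : ∀ m, 0 ≤ reflectedWalk y x m
  | 0 => hy
  | _ + 1 => le_max_right _ _

lemma reflectedWalk_congr {x' : ℕ → ℤ} {m : ℕ} (h : ∀ j < m, x j = x' j) :
    reflectedWalk y x m = reflectedWalk y x' m := by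
  induction m with
  | zero => rfl
  | succ m ih =>
    simp only [reflectedWalk, ih fun j hj => h j (by omega), h m (by omega)]

lemma add_sum_le_reflectedWalk {a b : ℕ} (hab : a ≤ b) :
    reflectedWalk y x a + ∑ m ∈ Ico a b, x m ≤ reflectedWalk y x b := by
  induction b, hab using Nat.le_induction with
  | base => simp
  | succ b hab ih =>
    rw [sum_Ico_succ_top hab, reflectedWalk]
    exact le_max_of_le_left (by linarith)

lemma reflectedWalk_eq_add_sum {a b : ℕ} (hab : a ≤ b)
    (h : ∀ m ∈ Ico a b, 0 ≤ reflectedWalk y x m + x m) :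
    reflectedWalk y x b = reflectedWalk y x a + ∑ m ∈ Ico a b, x m := by
  induction b, hab using Nat.le_induction with
  | base => simp
  | succ b hab ih =>
    rw [sum_Ico_succ_top hab, reflectedWalk, max_eq_left (h b (by simp [hab])),
      ih fun m hm => h m (by simp at hm ⊢; omega)]
    ring

lemma mul_le_reflectedWalk_add (hy : 0 ≤ y) {a w : ℕ} {c : ℤ}
    (h : ∀ m ∈ Ico a (a + w), x m = c) : w * c ≤ reflectedWalk y x (a + w) := by
  have hsum : ∑ m ∈ Ico a (a + w), x m = w * c := by
    rw [sum_congr rfl h, sum_const, Nat.card_Ico, Nat.add_sub_cancel_left, nsmul_eq_mul]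
  linarith [add_sum_le_reflectedWalk (y := y) (x := x) (Nat.le_add_right a w),
    reflectedWalk_nonneg hy (x := x) a]

lemma lt_reflectedWalk_of_lt (hx : ∀ m, -1 ≤ x m) {c : ℤ} {a b : ℕ} (hab : a ≤ b)
    (ha : c < reflectedWalk y x a) (hne : ∀ m ∈ Ioc a b, reflectedWalk y x m ≠ c) :
    c < reflectedWalk y x b := by
  induction b, hab using Nat.le_induction with
  | base => exact ha
  | succ b hab ih =>
    have hb := ih fun m hm => hne m (by simp at hm ⊢; omega)
    have hne' := hne (b + 1) (by simp; omega)
    have hstep : reflectedWalk y x b + x b ≤ reflectedWalk y x (b + 1) := le_max_left _ _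
    exact lt_of_le_of_ne (by linarith [hx b]) hne'.symm

lemma exists_lt_and_sum_nonneg (hy : 0 ≤ y) (hx : ∀ m, -1 ≤ x m) {n : ℕ}
    (hne : ∀ m ∈ Icc 1 n, reflectedWalk y x m ≠ y) :
    ∃ s ≤ n, (∀ m ∈ Icc 1 s, reflectedWalk y x m < y) ∧ 0 ≤ ∑ m ∈ Ico s n, x m := by
  classical
  set s := Nat.findGreatest (fun m => reflectedWalk y x m ≤ y) n
  have hs_le : reflectedWalk y x s ≤ y := Nat.findGreatest_spec (P := fun m => _ ≤ y)
    (Nat.zero_le n) (by simp [reflectedWalk])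
  have hsn : s ≤ n := Nat.findGreatest_le n
  have hgt : ∀ m, s < m → m ≤ n → y < reflectedWalk y x m := fun m h₁ h₂ =>
    not_le.mp (Nat.findGreatest_is_greatest h₁ h₂)
  refine ⟨s, hsn, fun m hm => ?_, ?_⟩
  · simp only [mem_Icc] at hm
    refine lt_of_le_of_ne (not_lt.mp fun hlt => ?_) (hne m (mem_Icc.mpr ⟨hm.1, hm.2.trans hsn⟩))
    have := lt_reflectedWalk_of_lt hx hm.2 hlt fun j hj =>
      hne j (by simp at hj ⊢; omega)
    omega
  · have hsum := reflectedWalk_eq_add_sum (y := y) (x := x) hsn fun m hm => by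
      simp only [mem_Ico] at hm
      have := hgt (m + 1) (by omega) (by omega)
      have hmax : max (reflectedWalk y x m + x m) 0 = reflectedWalk y x (m + 1) := rfl
      omega
    rcases hsn.eq_or_lt with h | h
    · simp [h]
    · linarith [hgt n h le_rfl]

end ReflectedWalk

lemma ENat.toENNReal_eq_tsum_ite (t : ℕ∞) :
    (t : ℝ≥0∞) = ∑' n : ℕ, if (n : ℕ∞) < t then 1 else 0 := by
  induction t using ENat.recTopCoe with
  | top => simp
  | coe t =>
    rw [tsum_eq_sum (s := range t) fun n hn => by simpa using hn,
      sum_ite_of_true fun n hn => by simpa using hn]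
    simp

lemma lintegral_enat_eq_tsum {Ω : Type*} [MeasurableSpace Ω] {μ : Measure Ω} {T : Ω → ℕ∞}
    (hT : ∀ n : ℕ, MeasurableSet {ω | (n : ℕ∞) < T ω}) :
    ∫⁻ ω, (T ω : ℝ≥0∞) ∂μ = ∑' n : ℕ, μ {ω | (n : ℕ∞) < T ω} := by
  have hT' (ω : Ω) : (T ω : ℝ≥0∞) = ∑' n : ℕ, {ω | (n : ℕ∞) < T ω}.indicator 1 ω := by
    simp [Set.indicator_apply, ENat.toENNReal_eq_tsum_ite (T ω)]
  simp_rw [hT', ← lintegral_indicator_one (hT _)]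
  exact lintegral_tsum fun n => (measurable_one.indicator (hT n)).aemeasurable

lemma lt_sInf_returnTimes_iff {y : ℕ → ℤ} {c : ℤ} {n : ℕ} :
    (n : ℕ∞) < sInf {t : ℕ∞ | ∃ m : ℕ, 1 ≤ m ∧ t = m ∧ y m = c} ↔ ∀ m ∈ Icc 1 n, y m ≠ c := by
  rw [← ENat.add_one_le_iff (ENat.natCast_ne_top n), le_sInf_iff]
  constructor
  · rintro h m hm rfl
    have := h m ⟨m, (mem_Icc.mp hm).1, rfl, rfl⟩
    norm_cast at this
    simp at hm; omega
  · rintro h _ ⟨m, hm, rfl, hym⟩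
    by_contra hlt
    norm_cast at hlt
    exact h m (mem_Icc.mpr ⟨hm, by omega⟩) hym

lemma ENNReal.tsum_mul_tsum_eq_tsum_sum_range (a b : ℕ → ℝ≥0∞) :
    (∑' n, a n) * ∑' n, b n = ∑' n, ∑ s ∈ range (n + 1), a s * b (n - s) := by
  simp_rw [← Nat.sum_antidiagonal_eq_sum_range_succ fun i j => a i * b j,
    ← ENNReal.tsum_mul_right, ← ENNReal.tsum_mul_left]
  rw [← ENNReal.tsum_prod, ← HasAntidiagonal.sigmaAntidiagonalEquivProd.tsum_eq,
    ENNReal.tsum_sigma']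
  simp [tsum_fintype, HasAntidiagonal.sigmaAntidiagonalEquivProd,
    sum_attach _ fun ij : ℕ × ℕ => a ij.1 * b ij.2]

lemma ENNReal.tsum_pow_div_lt_top {r : ℝ≥0∞} (hr : r < 1) {w : ℕ} (hw : w ≠ 0) :
    ∑' s : ℕ, r ^ (s / w) < ∞ := by
  have : NeZero w := ⟨hw⟩
  have hdiv (j : ℕ) (b : Fin w) : (j * w + b) / w = j := by
    rw [Nat.add_comm, Nat.add_mul_div_right _ _ (Nat.pos_of_ne_zero hw),
      Nat.div_eq_of_lt b.is_lt, Nat.zero_add]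
  rw [← (Nat.divModEquiv w).symm.tsum_eq]
  simp only [Nat.divModEquiv_symm_apply, hdiv]
  rw [ENNReal.tsum_prod']
  simp only [ENNReal.tsum_const, ENNReal.tsum_mul_left]
  exact ENNReal.mul_lt_top (by simp) (tsum_geometric_lt_top.mpr hr)

section DeterminedBy

variable {Ω ι β : Type*} {X : ι → Ω → β} {S T : Finset ι} {A B : Set Ω}

def DeterminedBy (X : ι → Ω → β) (S : Finset ι) (A : Set Ω) : Prop :=
  ∀ ⦃ω ω'⦄, (∀ j ∈ S, X j ω = X j ω') → ω ∈ A → ω' ∈ A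

lemma DeterminedBy.compl (hA : DeterminedBy X S A) : DeterminedBy X S Aᶜ :=
  fun _ _ h hω hω' => hω (hA (fun j hj => (h j hj).symm) hω')

lemma DeterminedBy.biInter {κ : Type*} {I : Finset κ} {S : κ → Finset ι} {A : κ → Set Ω}
    [DecidableEq ι] (hA : ∀ j ∈ I, DeterminedBy X (S j) (A j)) :
    DeterminedBy X (I.biUnion S) (⋂ j ∈ I, A j) := by
  intro ω ω' h hω
  simp only [Set.mem_iInter] at hω ⊢
  exact fun j hj => hA j hj (fun l hl => h l (mem_biUnion.mpr ⟨j, hj, hl⟩)) (hω j hj)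

lemma DeterminedBy.eq_preimage_image (hA : DeterminedBy X S A) :
    A = (fun ω (j : S) => X j ω) ⁻¹' ((fun ω (j : S) => X j ω) '' A) := by
  refine (Set.subset_preimage_image _ _).antisymm ?_
  rintro ω ⟨ω', hω', h⟩
  exact hA (fun j hj => congrFun h ⟨j, hj⟩) hω'

variable [MeasurableSpace Ω] [MeasurableSpace β] [Countable β] [MeasurableSingletonClass β]
  {μ : Measure Ω}

lemma DeterminedBy.measurableSet (hmeas : ∀ j, Measurable (X j)) (hA : DeterminedBy X S A) :
    MeasurableSet A := by
  rw [hA.eq_preimage_image]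
  exact measurable_pi_lambda (fun ω (j : S) => X j ω) (fun j => hmeas j) .of_discrete

lemma DeterminedBy.measure_inter_eq_mul (hX : iIndepFun X μ) (hmeas : ∀ j, Measurable (X j))
    (hST : Disjoint S T) (hA : DeterminedBy X S A) (hB : DeterminedBy X T B) :
    μ (A ∩ B) = μ A * μ B := by
  rw [hA.eq_preimage_image, hB.eq_preimage_image]
  exact (hX.indepFun_finset S T hST hmeas).measure_inter_preimage_eq_mul _ _
    .of_discrete .of_discrete

lemma measure_biInter_range_eq_prod (hX : iIndepFun X μ)
    (hmeas : ∀ j, Measurable (X j)) {S : ℕ → Finset ι} (hS : Pairwise (Disjoint on S))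
    {A : ℕ → Set Ω} (hA : ∀ j, DeterminedBy X (S j) (A j)) (J : ℕ) :
    μ (⋂ j ∈ range J, A j) = ∏ j ∈ range J, μ (A j) := by
  classical
  induction J with
  | zero => simpa using hX.isProbabilityMeasure.measure_univ
  | succ J ih =>
    rw [range_add_one, set_biInter_insert, Set.inter_comm, prod_insert notMem_range_self, ← ih,
      mul_comm]
    refine (DeterminedBy.biInter fun j _ => hA j).measure_inter_eq_mul hX hmeas ?_ (hA J)
    exact (Finset.disjoint_biUnion_left _ _ _).mpr fun j hj => hS (by simp at hj; omega)

end DeterminedBy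

lemma determinedBy_forall_reflectedWalk {Ω : Type*} {X : ℕ → Ω → ℤ} (y : ℤ) (P : ℤ → Prop)
    (n : ℕ) :
    DeterminedBy X (range n) {ω | ∀ m ∈ Icc 1 n, P (reflectedWalk y (X · ω) m)} := by
  intro ω ω' h hω m hm
  rw [reflectedWalk_congr fun j hj => (h j (mem_range.mpr (by simp at hm; omega))).symm]
  exact hω m hm

section Chernoff

variable {Ω ι : Type*} [MeasurableSpace Ω] {μ : Measure Ω} {X : ι → Ω → ℤ}

lemma measure_sum_nonneg_le_pow (hX : iIndepFun X μ) (hmeas : ∀ j, Measurable (X j))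
    {t : ℝ} (ht : 0 ≤ t) {r : ℝ≥0∞} (hr : ∀ j, ∫⁻ ω, .ofReal (Real.exp (t * X j ω)) ∂μ = r)
    (S : Finset ι) : μ {ω | 0 ≤ ∑ j ∈ S, X j ω} ≤ r ^ #S := by
  set g : ℤ → ℝ≥0∞ := fun z => .ofReal (Real.exp (t * z))
  set F : ι → Ω → ℝ≥0∞ := fun j => g ∘ X j
  have hFmeas (j : ι) : Measurable (F j) := (measurable_of_countable g).comp (hmeas j)
  have hFindep : iIndepFun F μ := hX.comp (fun _ => g) fun _ => measurable_of_countable g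
  have hsub : {ω | 0 ≤ ∑ j ∈ S, X j ω} ⊆ {ω | 1 ≤ ∏ j ∈ S, F j ω} := by
    intro ω hω
    simp only [Set.mem_ofPred_eq, F, g, comp_apply] at hω ⊢
    rw [← ENNReal.ofReal_prod_of_nonneg fun _ _ => (Real.exp_pos _).le, ← Real.exp_sum,
      ← mul_sum, ENNReal.one_le_ofReal, Real.one_le_exp_iff]
    exact mul_nonneg ht (by exact_mod_cast hω)
  calc μ {ω | 0 ≤ ∑ j ∈ S, X j ω} ≤ μ {ω | 1 ≤ ∏ j ∈ S, F j ω} := measure_mono hsub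
    _ ≤ ∫⁻ ω, ∏ j ∈ S, F j ω ∂μ := by
      simpa using mul_meas_ge_le_lintegral (Finset.measurable_prod S fun j _ => hFmeas j) 1
    _ = r ^ #S := by
      rw [lintegral_prod_eq_prod_lintegral_of_indepFun S F hFindep hFmeas]
      simp [F, g, hr]

end Chernoff

lemma lintegral_comp_eq_sum_of_ae_mem {Ω α : Type*} [MeasurableSpace Ω] [MeasurableSpace α]
    [Countable α] [MeasurableSingletonClass α] {μ : Measure Ω} {X : Ω → α} (hX : Measurable X)
    {s : Finset α} (hs : ∀ᵐ ω ∂μ, X ω ∈ s) (f : α → ℝ≥0∞) :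
    ∫⁻ ω, f (X ω) ∂μ = ∑ a ∈ s, f a * μ {ω | X ω = a} := by
  rw [← lintegral_map (.of_discrete) hX, lintegral_countable', tsum_eq_sum fun a ha => ?_]
  · simp_rw [Measure.map_apply hX (.singleton _)]
    rfl
  · rw [Measure.map_apply hX (.singleton _), measure_mono_null (fun ω hω => ?_) (ae_iff.mp hs),
      mul_zero]
    simp_all

noncomputable def binomialWeight (N : ℕ) (p : ℝ) (u : ℕ) : ℝ :=
  (N.choose u : ℝ) * p ^ u * (1 - p) ^ (N - u)

lemma binomialWeight_nonneg {N : ℕ} {p : ℝ} (hp0 : 0 ≤ p) (hp1 : p ≤ 1) (u : ℕ) :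
    0 ≤ binomialWeight N p u := by
  unfold binomialWeight
  have : 0 ≤ 1 - p := by linarith
  positivity

lemma sum_binomialWeight_mul_pow (N : ℕ) (p z : ℝ) :
    ∑ u ∈ range (N + 1), binomialWeight N p u * z ^ u = (1 - p + p * z) ^ N := by
  rw [add_comm (1 - p), add_pow]
  exact sum_congr rfl fun u _ => by unfold binomialWeight; ring

noncomputable def stepMgf (k : ℕ) (p t : ℝ) : ℝ :=
  Real.exp (-t) * (1 - p + p * Real.exp t) ^ (k + 1)

/-- Take `t = (1 - (k+1)p)/2` and use `1 + x ≤ eˣ` and `eᵗ ≤ 1/(1-t)`. -/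
lemma exists_stepMgf_lt_one {k : ℕ} {p : ℝ} (hp0 : 0 < p) (hkp : (k + 1) * p < 1) :
    ∃ t, 0 ≤ t ∧ stepMgf k p t < 1 := by
  set t := (1 - (k + 1) * p) / 2
  have hq : (k + 1) * p = 1 - 2 * t := by simp only [t]; ring
  have ht0 : 0 < t := by linarith
  have ht1 : t < 1 / 2 := by linarith [mul_pos (by positivity : (0 : ℝ) < k + 1) hp0]
  have hexp : Real.exp t - 1 ≤ t / (1 - t) := by
    have h := Real.exp_bound_div_one_sub_of_interval ht0.le (by linarith)
    have : 1 / (1 - t) - 1 = t / (1 - t) := by rw [div_sub_one (by linarith)]; ring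
    linarith
  refine ⟨t, ht0.le, ?_⟩
  calc stepMgf k p t ≤ Real.exp (-t) * Real.exp (p * (Real.exp t - 1)) ^ (k + 1) := by
        unfold stepMgf
        gcongr
        · nlinarith [Real.exp_pos t]
        · linarith [Real.add_one_le_exp (p * (Real.exp t - 1))]
    _ = Real.exp (-t + (1 - 2 * t) * (Real.exp t - 1)) := by
        rw [← Real.exp_nat_mul, ← Real.exp_add, ← hq]; push_cast; ring_nf
    _ < 1 := by
        have : (1 - 2 * t) * (Real.exp t - 1) ≤ (1 - 2 * t) * (t / (1 - t)) := by gcongr; linarith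
        have : (1 - 2 * t) * (t / (1 - t)) < t := by
          rw [← mul_div_assoc, div_lt_iff₀ (by linarith)]; nlinarith
        rw [Real.exp_lt_one_iff]
        linarith

section BinomialIncrements

variable {Ω : Type*} [MeasurableSpace Ω] {μ : Measure Ω} {X : ℕ → Ω → ℤ} {k : ℕ} {p : ℝ}

def HasBinomialIncrements (μ : Measure Ω) (X : ℕ → Ω → ℤ) (k : ℕ) (p : ℝ) : Prop :=
  ∀ n, ∀ u : ℕ, u ≤ k + 1 →
    μ {ω | X n ω = (u : ℤ) - 1} = ENNReal.ofReal (binomialWeight (k + 1) p u)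

def stepValues (k : ℕ) : Finset ℤ := (range (k + 2)).image fun u : ℕ => (u : ℤ) - 1

lemma sum_stepValues (k : ℕ) (f : ℤ → ℝ≥0∞) :
    ∑ z ∈ stepValues k, f z = ∑ u ∈ range (k + 2), f ((u : ℤ) - 1) :=
  sum_image fun _ _ _ _ h => by omega

lemma HasBinomialIncrements.ae_mem_stepValues [IsProbabilityMeasure μ]
    (hX : HasBinomialIncrements μ X k p) (hmeas : ∀ n, Measurable (X n)) (hp0 : 0 ≤ p)
    (hp1 : p ≤ 1) (n : ℕ) : ∀ᵐ ω ∂μ, X n ω ∈ stepValues k := by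
  have hmass : μ (X n ⁻¹' stepValues k) = 1 := by
    rw [← sum_measure_preimage_singleton _ fun _ _ => hmeas n (.singleton _), sum_stepValues]
    calc ∑ u ∈ range (k + 2), μ (X n ⁻¹' {(u : ℤ) - 1})
        = ∑ u ∈ range (k + 2), .ofReal (binomialWeight (k + 1) p u) :=
          sum_congr rfl fun u hu => hX n u (by simp at hu; omega)
      _ = 1 := by
          rw [← ENNReal.ofReal_sum_of_nonneg fun u _ => binomialWeight_nonneg hp0 hp1 u]
          simpa using sum_binomialWeight_mul_pow (k + 1) p 1
  exact (prob_compl_eq_zero_iff (hmeas n (.of_discrete))).mpr hmass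

lemma HasBinomialIncrements.ae_neg_one_le [IsProbabilityMeasure μ]
    (hX : HasBinomialIncrements μ X k p) (hmeas : ∀ n, Measurable (X n)) (hp0 : 0 ≤ p)
    (hp1 : p ≤ 1) : ∀ᵐ ω ∂μ, ∀ n, -1 ≤ X n ω := by
  refine ae_all_iff.mpr fun n => (hX.ae_mem_stepValues hmeas hp0 hp1 n).mono fun ω hω => ?_
  simp only [stepValues, mem_image] at hω
  obtain ⟨u, -, hu⟩ := hω
  omega

lemma HasBinomialIncrements.lintegral_exp [IsProbabilityMeasure μ]
    (hX : HasBinomialIncrements μ X k p) (hmeas : ∀ n, Measurable (X n)) (hp0 : 0 ≤ p)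
    (hp1 : p ≤ 1) (t : ℝ) (n : ℕ) :
    ∫⁻ ω, .ofReal (Real.exp (t * X n ω)) ∂μ = .ofReal (stepMgf k p t) := by
  rw [lintegral_comp_eq_sum_of_ae_mem (f := fun z : ℤ => .ofReal (Real.exp (t * z))) (hmeas n)
      (hX.ae_mem_stepValues hmeas hp0 hp1 n), sum_stepValues]
  calc ∑ u ∈ range (k + 2), .ofReal (Real.exp (t * ((u : ℤ) - 1 : ℤ))) * μ {ω | X n ω = u - 1}
      = ∑ u ∈ range (k + 2),
          .ofReal (binomialWeight (k + 1) p u * Real.exp t ^ u * Real.exp (-t)) :=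
        sum_congr rfl fun u hu => by
          rw [hX n u (by simp at hu; omega), ← ENNReal.ofReal_mul (Real.exp_pos _).le,
            ← Real.exp_nat_mul, mul_assoc, ← Real.exp_add, mul_comm]
          push_cast
          ring_nf
    _ = .ofReal (stepMgf k p t) := by
        rw [← ENNReal.ofReal_sum_of_nonneg fun u _ => by
            have := binomialWeight_nonneg (N := k + 1) hp0 hp1 u
            positivity,
          ← sum_mul, sum_binomialWeight_mul_pow, stepMgf, mul_comm]

lemma HasBinomialIncrements.measure_eq_top (hX : HasBinomialIncrements μ X k p) (n : ℕ) :
    μ {ω | X n ω = k} = .ofReal (p ^ (k + 1)) := by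
  simpa [binomialWeight] using hX n (k + 1) le_rfl

end BinomialIncrements

section ReturnTail

variable {Ω : Type*} [MeasurableSpace Ω] {μ : Measure Ω} {X : ℕ → Ω → ℤ} {k : ℕ} {p : ℝ}

lemma measure_noReturn_le_sum (hind : iIndepFun X μ) (hmeas : ∀ n, Measurable (X n))
    (hstep : ∀ᵐ ω ∂μ, ∀ n, -1 ≤ X n ω) {y : ℤ} (hy : 0 ≤ y) (n : ℕ) :
    μ {ω | ∀ m ∈ Icc 1 n, reflectedWalk y (X · ω) m ≠ y} ≤
      ∑ s ∈ range (n + 1), μ {ω | ∀ m ∈ Icc 1 s, reflectedWalk y (X · ω) m < y} *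
        μ {ω | 0 ≤ ∑ m ∈ Ico s n, X m ω} := by
  set B : ℕ → Set Ω := fun s => {ω | ∀ m ∈ Icc 1 s, reflectedWalk y (X · ω) m < y}
  set C : ℕ → Set Ω := fun s => {ω | 0 ≤ ∑ m ∈ Ico s n, X m ω}
  have hC (s : ℕ) : DeterminedBy X (Ico s n) (C s) := fun ω ω' h hω => by
    simpa only [C, Set.mem_ofPred_eq, sum_congr rfl h] using hω
  calc μ {ω | ∀ m ∈ Icc 1 n, reflectedWalk y (X · ω) m ≠ y}
      ≤ μ (⋃ s ∈ range (n + 1), B s ∩ C s) := measure_mono_ae <| hstep.mono fun ω hω hne => by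
        obtain ⟨s, hs, hbelow, hsum⟩ := exists_lt_and_sum_nonneg hy hω hne
        exact Set.mem_biUnion (mem_range.mpr (by omega)) ⟨hbelow, hsum⟩
    _ ≤ ∑ s ∈ range (n + 1), μ (B s ∩ C s) := measure_biUnion_finset_le _ _
    _ = ∑ s ∈ range (n + 1), μ (B s) * μ (C s) := sum_congr rfl fun s _ =>
        (determinedBy_forall_reflectedWalk y (· < y) s).measure_inter_eq_mul hind hmeas
          (by rw [range_eq_Ico]; exact Ico_disjoint_Ico_consecutive 0 s n) (hC s)

lemma HasBinomialIncrements.measure_topRun (hX : HasBinomialIncrements μ X k p)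
    (hind : iIndepFun X μ) (a w : ℕ) :
    μ {ω | ∀ m ∈ Ico a (a + w), X m ω = k} = .ofReal (p ^ (k + 1)) ^ w := by
  rw [show {ω | ∀ m ∈ Ico a (a + w), X m ω = k} = ⋂ m ∈ Ico a (a + w), X m ⁻¹' {(k : ℤ)} by
      ext; simp,
    hind.measure_inter_preimage_eq_mul _ fun _ _ => .of_discrete]
  simp_rw [Set.preimage, Set.mem_singleton_iff, hX.measure_eq_top]
  simp

lemma HasBinomialIncrements.measure_staysBelow_le (hX : HasBinomialIncrements μ X k p)
    (hind : iIndepFun X μ) (hmeas : ∀ n, Measurable (X n)) {y : ℤ} (hy : 0 ≤ y) {w : ℕ}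
    (hyw : y ≤ w * k) (s : ℕ) :
    μ {ω | ∀ m ∈ Icc 1 s, reflectedWalk y (X · ω) m < y} ≤
      (1 - .ofReal (p ^ (k + 1)) ^ w) ^ (s / w) := by
  have := hind.isProbabilityMeasure
  set R : ℕ → Set Ω := fun j => {ω | ∀ m ∈ Ico (j * w) (j * w + w), X m ω = k}
  have hR (j : ℕ) : DeterminedBy X (Ico (j * w) (j * w + w)) (R j) :=
    fun ω ω' h hω m hm => (h m hm) ▸ hω m hm
  have hdisj : Pairwise (Disjoint on fun j => Ico (j * w) (j * w + w)) := by
    intro a b hab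
    simp only [onFun, disjoint_left, mem_Ico]
    rcases lt_or_gt_of_ne hab with h | h <;>
      have := Nat.mul_le_mul_right w (Nat.succ_le_of_lt h) <;> rw [Nat.succ_mul] at this <;> omega
  calc μ {ω | ∀ m ∈ Icc 1 s, reflectedWalk y (X · ω) m < y}
      ≤ μ (⋂ j ∈ range (s / w), (R j)ᶜ) := measure_mono fun ω hω => by
        simp only [Set.mem_iInter, Set.mem_compl_iff]
        intro j hj hrun
        have hjs : j * w + w ≤ s := by
          have := Nat.mul_le_mul_right w (mem_range.mp hj)
          rw [Nat.succ_mul] at this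
          exact this.trans (Nat.div_mul_le_self s w)
        have hw : w ≠ 0 := by rintro rfl; simp at hj
        have := hω (j * w + w) (mem_Icc.mpr ⟨by omega, hjs⟩)
        linarith [mul_le_reflectedWalk_add hy hrun]
    _ = ∏ j ∈ range (s / w), μ (R j)ᶜ :=
        measure_biInter_range_eq_prod hind hmeas hdisj (fun j => (hR j).compl) _
    _ = (1 - .ofReal (p ^ (k + 1)) ^ w) ^ (s / w) := by
        rw [prod_congr rfl fun j _ => by
          rw [prob_compl_eq_one_sub ((hR j).measurableSet hmeas), hX.measure_topRun hind],
          prod_const, card_range]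

theorem HasBinomialIncrements.tsum_measure_noReturn_lt_top (hX : HasBinomialIncrements μ X k p)
    (hind : iIndepFun X μ) (hmeas : ∀ n, Measurable (X n)) (hk : 1 ≤ k) (hp0 : 0 < p)
    (hkp : (k + 1) * p < 1) {y : ℤ} (hy : 0 ≤ y) :
    ∑' n, μ {ω | ∀ m ∈ Icc 1 n, reflectedWalk y (X · ω) m ≠ y} < ∞ := by
  have := hind.isProbabilityMeasure
  have hp1 : p ≤ 1 := by nlinarith [(by positivity : (0 : ℝ) ≤ k)]
  obtain ⟨t, ht, hmgf⟩ := exists_stepMgf_lt_one hp0 hkp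
  set w := max y.toNat 1
  have hyw : y ≤ w * k := by
    have : (y.toNat : ℤ) ≤ w := by omega
    nlinarith [Int.self_le_toNat y, (by exact_mod_cast hk : (1 : ℤ) ≤ k)]
  set β := 1 - ENNReal.ofReal (p ^ (k + 1)) ^ w
  set r := ENNReal.ofReal (stepMgf k p t)
  have hβ : β < 1 := ENNReal.sub_lt_self ENNReal.one_ne_top one_ne_zero
    (pow_ne_zero _ (ENNReal.ofReal_pos.mpr (pow_pos hp0 _)).ne')
  have hr : r < 1 := ENNReal.ofReal_lt_one.mpr hmgf
  calc ∑' n, μ {ω | ∀ m ∈ Icc 1 n, reflectedWalk y (X · ω) m ≠ y}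
      ≤ ∑' n, ∑ s ∈ range (n + 1), β ^ (s / w) * r ^ (n - s) := ENNReal.tsum_le_tsum fun n =>
        (measure_noReturn_le_sum hind hmeas (hX.ae_neg_one_le hmeas hp0.le hp1) hy n).trans <|
          sum_le_sum fun s _ => mul_le_mul' (hX.measure_staysBelow_le hind hmeas hy hyw s) <|
            (measure_sum_nonneg_le_pow hind hmeas ht (hX.lintegral_exp hmeas hp0.le hp1 t)
              _).trans_eq (by rw [Nat.card_Ico])
    _ = (∑' s, β ^ (s / w)) * ∑' m, r ^ m := (ENNReal.tsum_mul_tsum_eq_tsum_sum_range _ _).symm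
    _ < ∞ := ENNReal.mul_lt_top (ENNReal.tsum_pow_div_lt_top hβ (by omega))
        (tsum_geometric_lt_top.mpr hr)

end ReturnTail

theorem stmt_14_general {Ω : Type*} [MeasurableSpace Ω] (μ : Measure Ω)
    (k : ℕ) (hk : 1 ≤ k) (p : ℝ) (hp0 : 0 < p)
    (hpR : p < 1 / (k + 1 : ℝ))
    (X : ℕ → Ω → ℤ)
    (hmeas : ∀ n, Measurable (X n))
    (hindep : iIndepFun X μ)
    (hdist : ∀ n, ∀ u : ℕ, u ≤ k + 1 →
      μ {ω | X n ω = (u : ℤ) - 1} =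
        ENNReal.ofReal (((k + 1).choose u : ℝ) * p ^ u * (1 - p) ^ (k + 1 - u)))
    (Y : ℕ → ℕ → Ω → ℤ)
    (hY0 : ∀ y ω, Y y 0 ω = (y : ℤ))
    (hYs : ∀ y n ω, Y y (n + 1) ω = max (Y y n ω + X n ω) 0)
    (T : ℕ → Ω → ℕ∞)
    (hT : ∀ i ω, T i ω = sInf {n : ℕ∞ | ∃ m : ℕ, 1 ≤ m ∧ n = (m : ℕ∞) ∧ Y i m ω = (i : ℤ)}) :
    ∀ i : ℕ, ∫⁻ ω, (T i ω : ℝ≥0∞) ∂μ < ⊤ := by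
  intro i
  have hY (ω : Ω) (m : ℕ) : Y i m ω = reflectedWalk i (X · ω) m := by
    induction m with
    | zero => exact hY0 i ω
    | succ m ih => rw [hYs, ih]; rfl
  have hTail (n : ℕ) : {ω | (n : ℕ∞) < T i ω} =
      {ω | ∀ m ∈ Icc 1 n, reflectedWalk i (X · ω) m ≠ i} := by
    ext ω
    simp only [Set.mem_ofPred_eq, hT, hY, lt_sInf_returnTimes_iff]
  have hkp : (k + 1) * p < 1 := by rwa [lt_div_iff₀ (by positivity), mul_comm] at hpR
  rw [lintegral_enat_eq_tsum fun n => hTail n ▸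
    (determinedBy_forall_reflectedWalk _ (· ≠ (i : ℤ)) n).measurableSet hmeas]
  simp_rw [hTail]
  exact HasBinomialIncrements.tsum_measure_noReturn_lt_top hdist hindep hmeas hk hp0 hkp
    (Int.natCast_nonneg i)

/-- All states of the Tetrys chain are positive recurrent in the regime `p < 1/(k+1)`:
for every state `i`, the first return time to `i` of the reflected walk started at `i` has
finite expectation. -/
theorem stmt_14 {Ω : Type*} [MeasurableSpace Ω] (μ : Measure Ω) [IsProbabilityMeasure μ]
    (k : ℕ) (hk : 1 ≤ k) (p : ℝ) (hp0 : 0 < p)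
    (hpR : p < 1 / (k + 1 : ℝ))
    (X : ℕ → Ω → ℤ)
    (hmeas : ∀ n, Measurable (X n))
    (hindep : iIndepFun X μ)
    (hdist : ∀ n, ∀ u : ℕ, u ≤ k + 1 →
      μ {ω | X n ω = (u : ℤ) - 1} =
        ENNReal.ofReal (((k + 1).choose u : ℝ) * p ^ u * (1 - p) ^ (k + 1 - u)))
    (Y : ℕ → ℕ → Ω → ℤ)
    (hY0 : ∀ y ω, Y y 0 ω = (y : ℤ))
    (hYs : ∀ y n ω, Y y (n + 1) ω = max (Y y n ω + X n ω) 0)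
    (T : ℕ → Ω → ℕ∞)
    (hT : ∀ i ω, T i ω = sInf {n : ℕ∞ | ∃ m : ℕ, 1 ≤ m ∧ n = (m : ℕ∞) ∧ Y i m ω = (i : ℤ)}) :
    ∀ i : ℕ, ∫⁻ ω, (T i ω : ℝ≥0∞) ∂μ < ⊤ :=
  stmt_14_general μ k hk p hp0 hpR X hmeas hindep hdist Y hY0 hYs T hT
end
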